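/- arXiv:2001.06771 — 6 statements merged into one kernel-verified Lean document; each statement's English description precedes it below -/
import Mathlib

section
/- Let L : U → ℝ be smooth and suppose that Γ is the Euler–Lagrange field of L, i.e. Γ(∂L/∂u^a) = ∂L/∂x^a holds at every point of U for every a = 1,…,n. Then the velocity Hessian g_{ab} := ∂²L/∂u^a∂u^b satisfies the four Helmholtz conditions on U: g_{ab} = g_{ba}; Γ(g_{ab}) = g_{ac}Γ^c_b + g_{bc}Γ^c_a; g_{ac}Φ^c_b = g_{bc}Φ^c_a; and ∂g_{ab}/∂u^c = ∂g_{ac}/∂u^b, for all a,b,c. -/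
/- Setting: the evolution space E = ℝ × ℝ^n × ℝ^n with coordinates (t, x^a, u^a),
   a SODE ẍ^a = F^a(t,x,ẋ), and all the associated geometric objects. -/

noncomputable section

namespace IP

/-- The evolution space ℝ^{1+2n} with coordinates (t, x, u). -/
abbrev E (n : ℕ) : Type := ℝ × (Fin n → ℝ) × (Fin n → ℝ)

variable {n : ℕ}

/-- the coordinate vector ∂/∂t -/
def et (n : ℕ) : E n := (1, 0, 0)

/-- the coordinate vector ∂/∂x^a -/
def ex (a : Fin n) : E n := (0, Pi.single a 1, 0)

/-- the coordinate vector ∂/∂u^a -/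
def eu (a : Fin n) : E n := (0, 0, Pi.single a 1)

/-- the SODE vector field Γ = ∂/∂t + u^a ∂/∂x^a + F^a ∂/∂u^a (its value at p) -/
def GamV (F : Fin n → E n → ℝ) (p : E n) : E n := (1, p.2.2, fun a => F a p)

/-- Γ acting on functions as a first-order differential operator -/
def Gam (F : Fin n → E n → ℝ) (f : E n → ℝ) (p : E n) : ℝ := fderiv ℝ f p (GamV F p)

/-- the nonlinear connection coefficients Γ^a_b = -(1/2) ∂F^a/∂u^b -/
def Gc (F : Fin n → E n → ℝ) (a b : Fin n) (p : E n) : ℝ :=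
  -(1 / 2) * fderiv ℝ (F a) p (eu b)

/-- the Jacobi endomorphism Φ^a_b = -∂F^a/∂x^b - Γ^c_b Γ^a_c - Γ(Γ^a_b) -/
def Phi (F : Fin n → E n → ℝ) (a b : Fin n) (p : E n) : ℝ :=
  -(fderiv ℝ (F a) p (ex b)) - (∑ c, Gc F c b p * Gc F a c p) - Gam F (Gc F a b) p

/-- the contact 1-form θ^a = dx^a - u^a dt -/
def theta (a : Fin n) (p v : E n) : ℝ := v.2.1 a - p.2.2 a * v.1

/-- the 1-form ψ^a = du^a - F^a dt + Γ^a_b θ^b -/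
def psi (F : Fin n → E n → ℝ) (a : Fin n) (p v : E n) : ℝ :=
  v.2.2 a - F a p * v.1 + ∑ b, Gc F a b p * theta b p v

/-- the vertical vector field V_a = ∂/∂u^a -/
def Vv (a : Fin n) : E n := eu a

/-- the horizontal vector field H_a = ∂/∂x^a - Γ^b_a ∂/∂u^b (its value at p) -/
def Hv (F : Fin n → E n → ℝ) (a : Fin n) (p : E n) : E n :=
  (0, Pi.single a 1, fun b => -(Gc F b a p))

/-- exterior derivative of a 1-form, evaluated on (constant extensions of) vectors -/
def d1 (ω : E n → E n → ℝ) (p v w : E n) : ℝ :=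
  fderiv ℝ (fun q => ω q w) p v - fderiv ℝ (fun q => ω q v) p w

/-- exterior derivative of a 2-form, evaluated on (constant extensions of) vectors -/
def d2 (Ω : E n → E n → E n → ℝ) (p v1 v2 v3 : E n) : ℝ :=
  fderiv ℝ (fun q => Ω q v2 v3) p v1 - fderiv ℝ (fun q => Ω q v1 v3) p v2 +
    fderiv ℝ (fun q => Ω q v1 v2) p v3

/-- Lie bracket of vector fields on E -/
def lie (X Y : E n → E n) (p : E n) : E n := fderiv ℝ Y p (X p) - fderiv ℝ X p (Y p)

/-- the four Helmholtz conditions for a multiplier matrix g on U -/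
def Helmholtz (F : Fin n → E n → ℝ) (U : Set (E n)) (g : Fin n → Fin n → E n → ℝ) : Prop :=
  (∀ p ∈ U, ∀ a b, g a b p = g b a p) ∧
  (∀ p ∈ U, ∀ a b, Gam F (g a b) p =
      (∑ c, g a c p * Gc F c b p) + ∑ c, g b c p * Gc F c a p) ∧
  (∀ p ∈ U, ∀ a b, (∑ c, g a c p * Phi F c b p) = ∑ c, g b c p * Phi F c a p) ∧
  (∀ p ∈ U, ∀ a b c, fderiv ℝ (g a b) p (eu c) = fderiv ℝ (g a c) p (eu b))

/-- the curvature components R^d_{ef} -/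
def Rcoord (F : Fin n → E n → ℝ) (d e f : Fin n) (p : E n) : ℝ :=
  (1 / 2) * (fderiv ℝ (fun q => fderiv ℝ (F d) q (eu f)) p (ex e)
    - fderiv ℝ (fun q => fderiv ℝ (F d) q (eu e)) p (ex f)
    + (1 / 2) * ((∑ c, fderiv ℝ (F c) p (eu e) *
            fderiv ℝ (fun q => fderiv ℝ (F d) q (eu f)) p (eu c))
        - ∑ c, fderiv ℝ (F c) p (eu f) *
            fderiv ℝ (fun q => fderiv ℝ (F d) q (eu e)) p (eu c)))

/-- wedge product of two 1-forms -/
def w11 (α β : E n → E n → ℝ) (p v w : E n) : ℝ := α p v * β p w - α p w * β p v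

/-- wedge product of a 1-form with a 2-form -/
def w12 (α : E n → E n → ℝ) (Ω : E n → E n → E n → ℝ) (p v1 v2 v3 : E n) : ℝ :=
  α p v1 * Ω p v2 v3 - α p v2 * Ω p v1 v3 + α p v3 * Ω p v1 v2

/-- a smooth 1-form on U -/
def Smooth1 (U : Set (E n)) (α : E n → E n → ℝ) : Prop :=
  (∀ v, ContDiffOn ℝ (⊤ : ℕ∞) (fun q => α q v) U) ∧ ∀ p ∈ U, IsLinearMap ℝ (α p)

/-- the 2-form Ω = g_{ab} ψ^a ∧ θ^b -/
def OmegaG (F : Fin n → E n → ℝ) (g : Fin n → Fin n → E n → ℝ) :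
    E n → E n → E n → ℝ :=
  fun q v w => ∑ a, ∑ b, g a b q * w11 (psi F a) (theta b) q v w

end IP
/- Eigenstructure of Φ: distinct smooth eigenvalues, eigenvector fields X_a forming
   a basis at every point, dual coframe φ^a, the lifted eigenforms φ^{aV}, φ^{aH},
   the 2-forms ω^{ab}, ω^a, the structure functions τ and the curvature functions R. -/

namespace IP

variable {n : ℕ}

/-- the vertical eigenform φ^{aV} = φ^a_c ψ^c -/
def phiV (F : Fin n → E n → ℝ) (phc : Fin n → Fin n → E n → ℝ) (a : Fin n)
    (p v : E n) : ℝ :=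
  ∑ c, phc a c p * psi F c p v

/-- the horizontal eigenform φ^{aH} = φ^a_c θ^c -/
def phiH (phc : Fin n → Fin n → E n → ℝ) (a : Fin n) (p v : E n) : ℝ :=
  ∑ c, phc a c p * theta c p v

/-- the vertical eigenvector field X_a^V = X^c_a V_c -/
def XVf (X : Fin n → Fin n → E n → ℝ) (a : Fin n) (p : E n) : E n :=
  (0, 0, fun c => X a c p)

/-- the horizontal eigenvector field X_a^H = X^c_a H_c -/
def XHf (F : Fin n → E n → ℝ) (X : Fin n → Fin n → E n → ℝ) (a : Fin n) (p : E n) : E n :=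
  (0, fun c => X a c p, fun b => -∑ c, X a c p * Gc F b c p)

/-- the 2-forms ω^{ab} = (1/2)(φ^{aV} ∧ φ^{bH} + φ^{bV} ∧ φ^{aH}) -/
def omab (F : Fin n → E n → ℝ) (phc : Fin n → Fin n → E n → ℝ) (a b : Fin n)
    (p v w : E n) : ℝ :=
  (1 / 2) * (w11 (phiV F phc a) (phiH phc b) p v w + w11 (phiV F phc b) (phiH phc a) p v w)

/-- the 2-forms ω^a = φ^{aV} ∧ φ^{aH} -/
def oma (F : Fin n → E n → ℝ) (phc : Fin n → Fin n → E n → ℝ) (a : Fin n)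
    (p v w : E n) : ℝ :=
  w11 (phiV F phc a) (phiH phc a) p v w

/-- the structure functions τ^{aΓ}_b = -dφ^{aV}(Γ, X_b^V) -/
def tauG (F : Fin n → E n → ℝ) (X phc : Fin n → Fin n → E n → ℝ) (a b : Fin n)
    (p : E n) : ℝ :=
  -(d1 (phiV F phc a) p (GamV F p) (XVf X b p))

/-- the structure functions τ^{aH}_{bc} = dφ^{aV}(X_c^V, X_b^H) -/
def tauH (F : Fin n → E n → ℝ) (X phc : Fin n → Fin n → E n → ℝ) (a b c : Fin n)
    (p : E n) : ℝ :=
  d1 (phiV F phc a) p (XVf X c p) (XHf F X b p)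

/-- the structure functions τ^{aV}_{bc} = -dφ^{aH}(X_b^V, X_c^H) -/
def tauV (F : Fin n → E n → ℝ) (X phc : Fin n → Fin n → E n → ℝ) (a b c : Fin n)
    (p : E n) : ℝ :=
  -(d1 (phiH phc a) p (XVf X b p) (XHf F X c p))

/-- the curvature functions R^a_{bc} = φ^a_d X^e_b X^f_c R^d_{ef} -/
def Rphi (F : Fin n → E n → ℝ) (X phc : Fin n → Fin n → E n → ℝ) (a b c : Fin n)
    (p : E n) : ℝ :=
  ∑ d, ∑ e, ∑ f, phc a d p * X b e p * X c f p * Rcoord F d e f p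

/-- The standing hypotheses: F smooth, Φ diagonalisable on U with smooth eigenvalues λ_a,
pairwise distinct at every point, smooth eigenvector fields X_a (components X^c_a = `X a c`)
forming a basis of ℝ^n at every point, and dual coframe φ^a (components φ^a_c = `phc a c`). -/
structure EigenData (F : Fin n → E n → ℝ) (U : Set (E n)) (lam : Fin n → E n → ℝ)
    (X phc : Fin n → Fin n → E n → ℝ) : Prop where
  smooth_F : ∀ a, ContDiffOn ℝ (⊤ : ℕ∞) (F a) U
  smooth_lam : ∀ a, ContDiffOn ℝ (⊤ : ℕ∞) (lam a) U
  smooth_X : ∀ a c, ContDiffOn ℝ (⊤ : ℕ∞) (X a c) U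
  smooth_phc : ∀ a c, ContDiffOn ℝ (⊤ : ℕ∞) (phc a c) U
  distinct : ∀ p ∈ U, ∀ a b, a ≠ b → lam a p ≠ lam b p
  eigen : ∀ p ∈ U, ∀ a c, (∑ d, Phi F c d p * X a d p) = lam a p * X a c p
  dual : ∀ p ∈ U, ∀ a b, (∑ c, phc a c p * X b c p) = if a = b then (1 : ℝ) else 0

/-- `dη ∈ ⟨S⟩`: the 3-form η lies in the ideal generated by the 2-forms in S
(with smooth 1-form coefficients), as forms on U -/
def InIdeal (U : Set (E n)) (S : Set (E n → E n → E n → ℝ))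
    (η : E n → E n → E n → E n → ℝ) : Prop :=
  ∃ (m : ℕ) (Ω : Fin m → E n → E n → E n → ℝ) (α : Fin m → E n → E n → ℝ),
    (∀ j, Ω j ∈ S) ∧ (∀ j, Smooth1 U (α j)) ∧
      ∀ p ∈ U, ∀ v1 v2 v3, η p v1 v2 v3 = ∑ j, w12 (α j) (Ω j) p v1 v2 v3

/-- the C^∞(U)-module Σ⁰ spanned by {ω^{ab} : a ≤ b} (as forms on U) -/
def Sigma0 (F : Fin n → E n → ℝ) (phc : Fin n → Fin n → E n → ℝ) (U : Set (E n)) :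
    Set (E n → E n → E n → ℝ) :=
  {ω | ∃ r : Fin n → Fin n → E n → ℝ,
      (∀ a b, ContDiffOn ℝ (⊤ : ℕ∞) (r a b) U) ∧
      ∀ p ∈ U, ∀ v w, ω p v w =
        ∑ a, ∑ b, if a ≤ b then r a b p * omab F phc a b p v w else 0}

/-- the C^∞(U)-module Σ̃¹ spanned by {ω^a} (as forms on U) -/
def SigmaT1 (F : Fin n → E n → ℝ) (phc : Fin n → Fin n → E n → ℝ) (U : Set (E n)) :
    Set (E n → E n → E n → ℝ) :=
  {ω | ∃ r : Fin n → E n → ℝ,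
      (∀ a, ContDiffOn ℝ (⊤ : ℕ∞) (r a) U) ∧
      ∀ p ∈ U, ∀ v w, ω p v w = ∑ a, r a p * oma F phc a p v w}

/-- one step of the differential-ideal recursion: {ω ∈ S : dω ∈ ⟨S⟩} -/
def Next (U : Set (E n)) (S : Set (E n → E n → E n → ℝ)) : Set (E n → E n → E n → ℝ) :=
  {ω | ω ∈ S ∧ InIdeal U S (d2 ω)}

/-- the sequence Σ⁰, Σ¹, Σ², …  (`SigSeq F phc U i` is Σ^i) -/
def SigSeq (F : Fin n → E n → ℝ) (phc : Fin n → Fin n → E n → ℝ) (U : Set (E n)) :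
    ℕ → Set (E n → E n → E n → ℝ)
  | 0 => Sigma0 F phc U
  | k + 1 => Next U (SigSeq F phc U k)

/-- the sequence Σ̃¹, Σ̃², …  (`SigTSeq F phc U i` is Σ̃^{i+1}) -/
def SigTSeq (F : Fin n → E n → ℝ) (phc : Fin n → Fin n → E n → ℝ) (U : Set (E n)) :
    ℕ → Set (E n → E n → E n → ℝ)
  | 0 => SigmaT1 F phc U
  | k + 1 => Next U (SigTSeq F phc U k)

def ia (n : ℕ) (a : Fin n) : Fin (2 * n) := ⟨2 * a.1, by have := a.2; omega⟩

def ib (n : ℕ) (a : Fin n) : Fin (2 * n) := ⟨2 * a.1 + 1, by have := a.2; omega⟩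

/-- the wedge product ω_1 ∧ ω_2 ∧ ⋯ ∧ ω_n of n 2-forms, as a 2n-form -/
def WedgeN (ωs : Fin n → E n → E n → E n → ℝ) (p : E n) (v : Fin (2 * n) → E n) : ℝ :=
  (1 / 2 ^ n) * ∑ σ : Equiv.Perm (Fin (2 * n)),
    ((Equiv.Perm.sign σ : ℤ) : ℝ) * ∏ a, ωs a p (v (σ (ia n a))) (v (σ (ib n a)))

/-- Frobenius integrability of the eigen co-distribution D_a^⊥ = span{φ^{aV}, φ^{aH}} -/
def Integrable1 (F : Fin n → E n → ℝ) (phc : Fin n → Fin n → E n → ℝ) (U : Set (E n))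
    (a : Fin n) : Prop :=
  ∃ α β γ δ : E n → E n → ℝ,
    Smooth1 U α ∧ Smooth1 U β ∧ Smooth1 U γ ∧ Smooth1 U δ ∧
    (∀ p ∈ U, ∀ v w, d1 (phiV F phc a) p v w =
        w11 α (phiV F phc a) p v w + w11 β (phiH phc a) p v w) ∧
    (∀ p ∈ U, ∀ v w, d1 (phiH phc a) p v w =
        w11 γ (phiV F phc a) p v w + w11 δ (phiH phc a) p v w)

end IP

/-
Differentiating the Euler–Lagrange equations `Γ(∂L/∂u^a) = ∂L/∂x^a` along `∂/∂u^b` and `∂/∂x^b`,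
and commuting these derivatives past `Γ` (the commutators only involve `∂F/∂u` and `∂F/∂x`), gives,
with `g` the velocity Hessian and `A_ab = ∂²L/∂x^b∂u^a`,
  `Aᵀ - A = Γ(g) - 2 g Γ`   and   `Γ(A) + g ∂F/∂x` is symmetric.
The symmetric part of the first identity is the second Helmholtz condition, its antisymmetric part
reads `A - Aᵀ = g Γ - (g Γ)ᵀ`. Applying `Γ` to the latter and substituting into the second identity
shows that `g Φ` is symmetric. The first and fourth conditions are symmetry of second derivatives.
-/

section Calculus

variable {V W : Type*} [NormedAddCommGroup V] [NormedSpace ℝ V]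
  [NormedAddCommGroup W] [NormedSpace ℝ W] {f : V → W} {p : V}

theorem fderiv_fderiv_apply_eq_apply_fderiv (hf : DifferentiableAt ℝ (fderiv ℝ f) p) (v w : V) :
    fderiv ℝ (fun q => fderiv ℝ f q v) p w = fderiv ℝ (fderiv ℝ f) p w v := by
  rw [fderiv_clm_apply hf (differentiableAt_const v)]
  simp

theorem fderiv_fderiv_apply_comm (hf : ContDiffAt ℝ 2 f p) (v w : V) :
    fderiv ℝ (fun q => fderiv ℝ f q v) p w = fderiv ℝ (fun q => fderiv ℝ f q w) p v := by
  have hd : DifferentiableAt ℝ (fderiv ℝ f) p :=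
    (hf.fderiv_right (m := 1) le_rfl).differentiableAt one_ne_zero
  rw [fderiv_fderiv_apply_eq_apply_fderiv hd, fderiv_fderiv_apply_eq_apply_fderiv hd]
  exact hf.isSymmSndFDerivAt (by simp [minSmoothness_of_isRCLikeNormedField]) w v

theorem fderiv_fderiv_apply_vectorField (hf : ContDiffAt ℝ 2 f p) {X : V → V}
    (hX : DifferentiableAt ℝ X p) (v : V) :
    fderiv ℝ (fun q => fderiv ℝ f q (X q)) p v =
      fderiv ℝ (fun q => fderiv ℝ f q v) p (X p) + fderiv ℝ f p (fderiv ℝ X p v) := by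
  have hd : DifferentiableAt ℝ (fderiv ℝ f) p :=
    (hf.fderiv_right (m := 1) le_rfl).differentiableAt one_ne_zero
  rw [fderiv_clm_apply hd hX, fderiv_fderiv_apply_eq_apply_fderiv hd,
    hf.isSymmSndFDerivAt (by simp [minSmoothness_of_isRCLikeNormedField])]
  simp [add_comm]

theorem ContDiffOn.fderiv_apply_of_isOpen {U : Set V} (hU : IsOpen U)
    (hf : ContDiffOn ℝ (⊤ : ℕ∞) f U) (v : V) :
    ContDiffOn ℝ (⊤ : ℕ∞) (fun q => fderiv ℝ f q v) U :=
  (hf.fderiv_of_isOpen hU le_rfl).clm_apply contDiffOn_const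

theorem ContDiffOn.contDiffAt_of_isOpen {U : Set V} (hU : IsOpen U)
    (hf : ContDiffOn ℝ (⊤ : ℕ∞) f U) (hp : p ∈ U) {m : ℕ} : ContDiffAt ℝ m f p :=
  (hf.contDiffAt (hU.mem_nhds hp)).of_le (by exact_mod_cast le_top)

theorem ContDiffOn.differentiableAt_of_isOpen {U : Set V} (hU : IsOpen U)
    (hf : ContDiffOn ℝ (⊤ : ℕ∞) f U) (hp : p ∈ U) : DifferentiableAt ℝ f p :=
  (hf.contDiffAt_of_isOpen hU hp (m := 1)).differentiableAt one_ne_zero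

end Calculus

namespace IP

open Matrix

-- The algebra behind the third Helmholtz condition, `dX` standing for `Γ(X)`.
theorem transpose_mul_jacobi {R ι : Type*} [CommRing R] [Fintype ι]
    {G Γ J dG dA dΓ : Matrix ι ι R} (hG : Gᵀ = G) (h2 : dG = G * Γ + (G * Γ)ᵀ)
    (hI : (dA + G * J)ᵀ = dA + G * J)
    (hII : dA - dAᵀ = dG * Γ + G * dΓ - (dG * Γ + G * dΓ)ᵀ) :
    (G * (-J - Γ * Γ - dΓ))ᵀ = G * (-J - Γ * Γ - dΓ) := by
  subst h2
  simp only [transpose_add, transpose_sub, transpose_mul, transpose_neg, transpose_transpose,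
    hG] at hI hII ⊢
  linear_combination (norm := noncomm_ring) -hI - hII

variable {n : ℕ} {F : Fin n → E n → ℝ} {p : E n}

theorem hasFDerivAt_GamV (hF : ∀ c, DifferentiableAt ℝ (F c) p) :
    HasFDerivAt (GamV F) ((0 : E n →L[ℝ] ℝ).prod
      (((ContinuousLinearMap.snd ℝ _ _).comp (ContinuousLinearMap.snd ℝ _ _)).prod
        (ContinuousLinearMap.pi fun c => fderiv ℝ (F c) p))) p :=
  (hasFDerivAt_const 1 p).prodMk
    ((hasFDerivAt_snd.snd).prodMk (hasFDerivAt_pi.2 fun c => (hF c).hasFDerivAt))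

theorem fderiv_GamV_apply (hF : ∀ c, DifferentiableAt ℝ (F c) p) (v : E n) :
    fderiv ℝ (GamV F) p v = (0, v.2.2, fun c => fderiv ℝ (F c) p v) := by
  rw [(hasFDerivAt_GamV hF).fderiv]
  rfl

theorem mk_zero_eq_sum (x w : Fin n → ℝ) :
    ((0, x, w) : E n) = ∑ c, x c • ex c + ∑ c, w c • eu c := by
  ext <;> simp [ex, eu, Prod.fst_sum, Prod.snd_sum, Finset.sum_apply, Pi.single_apply]

theorem fderiv_Gam_apply {f : E n → ℝ} (hf : ContDiffAt ℝ 2 f p)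
    (hF : ∀ c, DifferentiableAt ℝ (F c) p) (v : E n) :
    fderiv ℝ (Gam F f) p v = Gam F (fun q => fderiv ℝ f q v) p +
      (∑ c, v.2.2 c * fderiv ℝ f p (ex c) + ∑ c, fderiv ℝ (F c) p v * fderiv ℝ f p (eu c)) := by
  have hGamV : DifferentiableAt ℝ (GamV F) p := (hasFDerivAt_GamV hF).differentiableAt
  unfold Gam
  rw [fderiv_fderiv_apply_vectorField hf hGamV, fderiv_GamV_apply hF, mk_zero_eq_sum]
  simp only [map_add, map_sum, map_smul, smul_eq_mul]

theorem Gam_congr_of_eqOn {U : Set (E n)} {f g : E n → ℝ} (hU : IsOpen U) (h : Set.EqOn f g U)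
    (hp : p ∈ U) : Gam F f p = Gam F g p := by
  unfold Gam
  rw [(h.eventuallyEq_of_mem (hU.mem_nhds hp)).fderiv_eq]

def GamMat (F : Fin n → E n → ℝ) (M : E n → Matrix (Fin n) (Fin n) ℝ) (p : E n) :
    Matrix (Fin n) (Fin n) ℝ :=
  Matrix.of fun a b => Gam F (fun q => M q a b) p

section GamMat

variable {M N : E n → Matrix (Fin n) (Fin n) ℝ}

theorem GamMat_transpose : GamMat F (fun q => (M q)ᵀ) p = (GamMat F M p)ᵀ := rfl

theorem GamMat_congr_of_eqOn {U : Set (E n)} (hU : IsOpen U) (h : Set.EqOn M N U) (hp : p ∈ U) :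
    GamMat F M p = GamMat F N p := by
  ext a b
  exact Gam_congr_of_eqOn hU (fun q hq => congrFun (congrFun (h hq) a) b) hp

theorem GamMat_sub (hM : ∀ a b, DifferentiableAt ℝ (fun q => M q a b) p)
    (hN : ∀ a b, DifferentiableAt ℝ (fun q => N q a b) p) :
    GamMat F (fun q => M q - N q) p = GamMat F M p - GamMat F N p := by
  ext a b
  change fderiv ℝ (fun q => M q a b - N q a b) p (GamV F p) = _
  rw [fderiv_fun_sub (hM a b) (hN a b)]
  rfl

theorem GamMat_mul (hM : ∀ a b, DifferentiableAt ℝ (fun q => M q a b) p)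
    (hN : ∀ a b, DifferentiableAt ℝ (fun q => N q a b) p) :
    GamMat F (fun q => M q * N q) p = GamMat F M p * N p + M p * GamMat F N p := by
  ext a b
  change fderiv ℝ (fun q => ∑ c, M q a c * N q c b) p (GamV F p) = _
  simp only [fderiv_fun_sum fun c _ => (hM a c).fun_mul (hN c b), _root_.sum_apply,
    fderiv_fun_mul (hM _ _) (hN _ _), _root_.add_apply, _root_.smul_apply, smul_eq_mul,
    Matrix.add_apply, mul_apply, GamMat, Gam, of_apply, ← Finset.sum_add_distrib]
  exact Finset.sum_congr rfl fun c _ => by ring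

theorem GamMat_mul_sub_transpose (hM : ∀ a b, DifferentiableAt ℝ (fun q => M q a b) p)
    (hN : ∀ a b, DifferentiableAt ℝ (fun q => N q a b) p) :
    GamMat F (fun q => M q * N q - (M q * N q)ᵀ) p =
      GamMat F M p * N p + M p * GamMat F N p - (GamMat F M p * N p + M p * GamMat F N p)ᵀ := by
  have hMN : ∀ a b, DifferentiableAt ℝ (fun q => (M q * N q) a b) p := fun a b => by
    simpa only [mul_apply] using DifferentiableAt.fun_sum fun c _ => (hM a c).fun_mul (hN c b)
  rw [GamMat_sub (N := fun q => (M q * N q)ᵀ) hMN fun a b => hMN b a, GamMat_transpose,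
    GamMat_mul hM hN]

end GamMat

def velocityHessian (L : E n → ℝ) (q : E n) : Matrix (Fin n) (Fin n) ℝ :=
  Matrix.of fun a b => fderiv ℝ (fun r => fderiv ℝ L r (eu a)) q (eu b)

def mixedHessian (L : E n → ℝ) (q : E n) : Matrix (Fin n) (Fin n) ℝ :=
  Matrix.of fun a b => fderiv ℝ (fun r => fderiv ℝ L r (eu a)) q (ex b)

def connectionMatrix (F : Fin n → E n → ℝ) (q : E n) : Matrix (Fin n) (Fin n) ℝ :=
  Matrix.of fun a b => Gc F a b q

def jacobianX (F : Fin n → E n → ℝ) (q : E n) : Matrix (Fin n) (Fin n) ℝ :=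
  Matrix.of fun a b => fderiv ℝ (F a) q (ex b)

theorem of_Phi (q : E n) :
    Matrix.of (fun a b => Phi F a b q) =
      -jacobianX F q - connectionMatrix F q * connectionMatrix F q -
        GamMat F (connectionMatrix F) q := by
  ext a b
  simp only [Phi, jacobianX, connectionMatrix, GamMat, of_apply, Matrix.sub_apply,
    Matrix.neg_apply, mul_apply]
  rw [Finset.sum_congr rfl fun c _ => mul_comm (Gc F c b q) (Gc F a c q)]

def IsEulerLagrangeField (F : Fin n → E n → ℝ) (L : E n → ℝ) (U : Set (E n)) : Prop :=
  ∀ p ∈ U, ∀ a, Gam F (fun q => fderiv ℝ L q (eu a)) p = fderiv ℝ L p (ex a)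

section EulerLagrange

variable {U : Set (E n)} {L : E n → ℝ}

theorem velocityHessian_transpose (hU : IsOpen U) (hL : ContDiffOn ℝ (⊤ : ℕ∞) L U)
    (hp : p ∈ U) : (velocityHessian L p)ᵀ = velocityHessian L p := by
  ext a b
  exact fderiv_fderiv_apply_comm (hL.contDiffAt_of_isOpen hU hp) (eu b) (eu a)

theorem contDiffOn_velocityHessian_apply (hU : IsOpen U) (hL : ContDiffOn ℝ (⊤ : ℕ∞) L U)
    (a b : Fin n) : ContDiffOn ℝ (⊤ : ℕ∞) (fun q => velocityHessian L q a b) U :=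
  (hL.fderiv_apply_of_isOpen hU (eu a)).fderiv_apply_of_isOpen hU (eu b)

theorem contDiffOn_mixedHessian_apply (hU : IsOpen U) (hL : ContDiffOn ℝ (⊤ : ℕ∞) L U)
    (a b : Fin n) : ContDiffOn ℝ (⊤ : ℕ∞) (fun q => mixedHessian L q a b) U :=
  (hL.fderiv_apply_of_isOpen hU (eu a)).fderiv_apply_of_isOpen hU (ex b)

theorem contDiffOn_connectionMatrix_apply (hU : IsOpen U)
    (hF : ∀ a, ContDiffOn ℝ (⊤ : ℕ∞) (F a) U) (a b : Fin n) :
    ContDiffOn ℝ (⊤ : ℕ∞) (fun q => connectionMatrix F q a b) U :=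
  contDiffOn_const.mul ((hF a).fderiv_apply_of_isOpen hU (eu b))

-- `∂_v` of the Euler–Lagrange equation for `a`, with `∂_v` commuted past `Γ`.
theorem fderiv_EulerLagrange (hU : IsOpen U) (hF : ∀ a, ContDiffOn ℝ (⊤ : ℕ∞) (F a) U)
    (hL : ContDiffOn ℝ (⊤ : ℕ∞) L U) (hEL : IsEulerLagrangeField F L U) (hp : p ∈ U)
    (a : Fin n) (v : E n) :
    Gam F (fun q => fderiv ℝ (fun r => fderiv ℝ L r (eu a)) q v) p +
        (∑ c, v.2.2 c * mixedHessian L p a c + ∑ c, fderiv ℝ (F c) p v * velocityHessian L p a c) =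
      fderiv ℝ (fun q => fderiv ℝ L q v) p (ex a) := by
  have hGam : Set.EqOn (Gam F fun q => fderiv ℝ L q (eu a)) (fun q => fderiv ℝ L q (ex a)) U :=
    fun q hq => hEL q hq a
  have h := fderiv_Gam_apply ((hL.fderiv_apply_of_isOpen hU (eu a)).contDiffAt_of_isOpen hU hp)
    (fun c => (hF c).differentiableAt_of_isOpen hU hp) v
  rw [(hGam.eventuallyEq_of_mem (hU.mem_nhds hp)).fderiv_eq,
    fderiv_fderiv_apply_comm (hL.contDiffAt_of_isOpen hU hp)] at h
  exact h.symm

theorem mixedHessian_transpose_sub (hU : IsOpen U) (hF : ∀ a, ContDiffOn ℝ (⊤ : ℕ∞) (F a) U)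
    (hL : ContDiffOn ℝ (⊤ : ℕ∞) L U) (hEL : IsEulerLagrangeField F L U) (hp : p ∈ U) :
    (mixedHessian L p)ᵀ - mixedHessian L p =
      GamMat F (velocityHessian L) p - (2 : ℝ) • (velocityHessian L p * connectionMatrix F p) := by
  ext a b
  have h : GamMat F (velocityHessian L) p a b +
      (∑ c, (eu b : E n).2.2 c * mixedHessian L p a c +
        ∑ c, fderiv ℝ (F c) p (eu b) * velocityHessian L p a c) = mixedHessian L p b a :=
    fderiv_EulerLagrange hU hF hL hEL hp a (eu b)
  have hdiag : ∑ c, (eu b : E n).2.2 c * mixedHessian L p a c = mixedHessian L p a b := by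
    simp [eu, Pi.single_apply]
  have hconn : ∑ c, fderiv ℝ (F c) p (eu b) * velocityHessian L p a c =
      -(2 * (velocityHessian L p * connectionMatrix F p) a b) := by
    simp only [mul_apply, Finset.mul_sum, ← Finset.sum_neg_distrib, connectionMatrix, Gc,
      of_apply]
    exact Finset.sum_congr rfl fun c _ => by ring
  rw [hdiag, hconn] at h
  simp only [Matrix.sub_apply, transpose_apply, Matrix.smul_apply, smul_eq_mul]
  linarith

theorem GamMat_velocityHessian (hU : IsOpen U) (hF : ∀ a, ContDiffOn ℝ (⊤ : ℕ∞) (F a) U)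
    (hL : ContDiffOn ℝ (⊤ : ℕ∞) L U) (hEL : IsEulerLagrangeField F L U) (hp : p ∈ U) :
    GamMat F (velocityHessian L) p =
      velocityHessian L p * connectionMatrix F p +
        (velocityHessian L p * connectionMatrix F p)ᵀ := by
  have h := mixedHessian_transpose_sub hU hF hL hEL hp
  have hsymm : (GamMat F (velocityHessian L) p)ᵀ = GamMat F (velocityHessian L) p := by
    rw [← GamMat_transpose]
    exact GamMat_congr_of_eqOn hU (fun q hq => velocityHessian_transpose hU hL hq) hp
  have ht := congrArg transpose h
  rw [transpose_sub, transpose_sub, transpose_transpose, transpose_smul, hsymm] at ht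
  linear_combination (norm := module) (-(1 / 2) : ℝ) • (h + ht)

theorem mixedHessian_sub_transpose (hU : IsOpen U) (hF : ∀ a, ContDiffOn ℝ (⊤ : ℕ∞) (F a) U)
    (hL : ContDiffOn ℝ (⊤ : ℕ∞) L U) (hEL : IsEulerLagrangeField F L U) (hp : p ∈ U) :
    mixedHessian L p - (mixedHessian L p)ᵀ =
      velocityHessian L p * connectionMatrix F p -
        (velocityHessian L p * connectionMatrix F p)ᵀ := by
  linear_combination (norm := module)
    -mixedHessian_transpose_sub hU hF hL hEL hp - GamMat_velocityHessian hU hF hL hEL hp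

theorem transpose_GamMat_mixedHessian_add (hU : IsOpen U)
    (hF : ∀ a, ContDiffOn ℝ (⊤ : ℕ∞) (F a) U) (hL : ContDiffOn ℝ (⊤ : ℕ∞) L U)
    (hEL : IsEulerLagrangeField F L U) (hp : p ∈ U) :
    (GamMat F (mixedHessian L) p + velocityHessian L p * jacobianX F p)ᵀ =
      GamMat F (mixedHessian L) p + velocityHessian L p * jacobianX F p := by
  have hentry : ∀ a b, (GamMat F (mixedHessian L) p + velocityHessian L p * jacobianX F p) a b =
      fderiv ℝ (fun q => fderiv ℝ L q (ex b)) p (ex a) := fun a b => by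
    rw [← fderiv_EulerLagrange hU hF hL hEL hp a (ex b)]
    simp only [show (ex b : E n).2.2 = 0 from rfl, Pi.zero_apply, zero_mul, Finset.sum_const_zero,
      zero_add, Matrix.add_apply, mul_apply, jacobianX, of_apply]
    exact congrArg _ (Finset.sum_congr rfl fun c _ => mul_comm _ _)
  ext a b
  rw [transpose_apply, hentry, hentry]
  exact fderiv_fderiv_apply_comm (hL.contDiffAt_of_isOpen hU hp) (ex a) (ex b)

theorem GamMat_mixedHessian_sub_transpose (hU : IsOpen U)
    (hF : ∀ a, ContDiffOn ℝ (⊤ : ℕ∞) (F a) U) (hL : ContDiffOn ℝ (⊤ : ℕ∞) L U)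
    (hEL : IsEulerLagrangeField F L U) (hp : p ∈ U) :
    GamMat F (mixedHessian L) p - (GamMat F (mixedHessian L) p)ᵀ =
      GamMat F (velocityHessian L) p * connectionMatrix F p +
          velocityHessian L p * GamMat F (connectionMatrix F) p -
        (GamMat F (velocityHessian L) p * connectionMatrix F p +
          velocityHessian L p * GamMat F (connectionMatrix F) p)ᵀ := by
  have hA a b := (contDiffOn_mixedHessian_apply hU hL a b).differentiableAt_of_isOpen hU hp
  have hG a b := (contDiffOn_velocityHessian_apply hU hL a b).differentiableAt_of_isOpen hU hp
  have hΓ a b := (contDiffOn_connectionMatrix_apply hU hF a b).differentiableAt_of_isOpen hU hp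
  rw [← GamMat_transpose, ← GamMat_sub (N := fun q => (mixedHessian L q)ᵀ) hA fun a b => hA b a,
    ← GamMat_mul_sub_transpose hG hΓ]
  exact GamMat_congr_of_eqOn hU (fun q hq => mixedHessian_sub_transpose hU hF hL hEL hq) hp

theorem transpose_velocityHessian_mul_Phi (hU : IsOpen U)
    (hF : ∀ a, ContDiffOn ℝ (⊤ : ℕ∞) (F a) U) (hL : ContDiffOn ℝ (⊤ : ℕ∞) L U)
    (hEL : IsEulerLagrangeField F L U) (hp : p ∈ U) :
    (velocityHessian L p * Matrix.of fun a b => Phi F a b p)ᵀ =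
      velocityHessian L p * Matrix.of fun a b => Phi F a b p := by
  rw [of_Phi]
  exact transpose_mul_jacobi (velocityHessian_transpose hU hL hp)
    (GamMat_velocityHessian hU hF hL hEL hp) (transpose_GamMat_mixedHessian_add hU hF hL hEL hp)
    (GamMat_mixedHessian_sub_transpose hU hF hL hEL hp)

end EulerLagrange

/-- if Γ is the Euler–Lagrange field of a smooth Lagrangian L on U, then the
velocity Hessian g_{ab} = ∂²L/∂u^a∂u^b satisfies the four Helmholtz conditions on U. -/
theorem stmt0 {n : ℕ} (U : Set (E n)) (hU : IsOpen U) (F : Fin n → E n → ℝ)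
    (hF : ∀ a, ContDiffOn ℝ (⊤ : ℕ∞) (F a) U) (L : E n → ℝ)
    (hL : ContDiffOn ℝ (⊤ : ℕ∞) L U)
    (hEL : ∀ p ∈ U, ∀ a, Gam F (fun q => fderiv ℝ L q (eu a)) p = fderiv ℝ L p (ex a)) :
    Helmholtz F U (fun a b p => fderiv ℝ (fun q => fderiv ℝ L q (eu a)) p (eu b)) := by
  refine ⟨fun p hp a b => ?_, fun p hp a b => ?_, fun p hp a b => ?_, fun p hp a b c => ?_⟩
  · exact congr_fun₂ (velocityHessian_transpose hU hL hp) b a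
  · have h := congr_fun₂ (GamMat_velocityHessian hU hF hL hEL hp) a b
    rw [Matrix.add_apply, transpose_apply, mul_apply, mul_apply] at h
    exact h
  · have h := congr_fun₂ (transpose_velocityHessian_mul_Phi hU hF hL hEL hp) b a
    rw [transpose_apply, mul_apply, mul_apply] at h
    exact h
  · exact fderiv_fderiv_apply_comm
      ((hL.fderiv_apply_of_isOpen hU (eu a)).contDiffAt_of_isOpen hU hp) (eu b) (eu c)

end IP
end
end

section
/- Let g = (g_{ab}) be a smooth matrix-valued function on U and set Ω := g_{ab} ψ^a ∧ θ^b. If at every point of U and for all indices a,b,c one has dΩ(Γ, V_a, V_b) = 0, dΩ(Γ, V_a, H_b) = 0, dΩ(Γ, H_a, H_b) = 0 and dΩ(H_a, V_b, V_c) = 0, then also dΩ(H_a, H_b, V_c) = 0 and dΩ(H_a, H_b, H_c) = 0 at every point for all indices; consequently dΩ = 0 on U. -/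
/-
`dΩ` is an alternating 3-form and `(Γ, H_a, V_a)` is a frame, so it suffices to show that `dΩ`
vanishes on frame vectors. The hypotheses give `i_Γ dΩ = 0`, and together with `Ω(V_a, V_b) = 0`
also `dΩ(·, V_b, V_c) = 0`. The remaining components come from `d(dΩ) = 0` evaluated on
`(Γ, H_a, V_b, V_c)` and on `(Γ, H_b, H_c, V_a)`, with `Γ` frozen at the point: since `i_Γ dΩ = 0`
nearby, differentiating `dΩ(Γ(p), v, w)` only differentiates `Γ`, and `DΓ(V_b) ≡ H_b` modulo
vertical vectors. The first identity makes `dΩ(H_b, H_a, V_c)` symmetric in `b, c`; being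
antisymmetric in `a, b`, it vanishes. The second identity then reduces to `dΩ(H_a, H_b, H_c) = 0`.
-/

/- Setting: the evolution space E = ℝ × ℝ^n × ℝ^n with coordinates (t, x^a, u^a),
   a SODE ẍ^a = F^a(t,x,ẋ), and all the associated geometric objects. -/

noncomputable section

namespace IP

open Topology

variable {n : ℕ}

def d3 (η : E n → E n → E n → E n → ℝ) (p v0 v1 v2 v3 : E n) : ℝ :=
  fderiv ℝ (fun q => η q v1 v2 v3) p v0 - fderiv ℝ (fun q => η q v0 v2 v3) p v1 +
    fderiv ℝ (fun q => η q v0 v1 v3) p v2 - fderiv ℝ (fun q => η q v0 v1 v2) p v3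

section ExteriorDerivative

variable {Ω : E n → E n → E n → ℝ} {p : E n}

theorem d2_swap12 (hΩ : ∀ q v w, Ω q w v = -Ω q v w) (q v1 v2 v3 : E n) :
    d2 Ω q v2 v1 v3 = -d2 Ω q v1 v2 v3 := by
  have h : (fun q => Ω q v2 v1) = fun q => -Ω q v1 v2 := funext fun q => hΩ q v1 v2
  simp only [d2, h, fderiv_fun_neg, neg_apply]
  ring

theorem d2_swap23 (hΩ : ∀ q v w, Ω q w v = -Ω q v w) (q v1 v2 v3 : E n) :
    d2 Ω q v1 v3 v2 = -d2 Ω q v1 v2 v3 := by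
  have h : (fun q => Ω q v3 v2) = fun q => -Ω q v2 v3 := funext fun q => hΩ q v2 v3
  simp only [d2, h, fderiv_fun_neg, neg_apply]
  ring

theorem d2_rotate (hΩ : ∀ q v w, Ω q w v = -Ω q v w) (q v1 v2 v3 : E n) :
    d2 Ω q v3 v1 v2 = d2 Ω q v1 v2 v3 := by
  rw [d2_swap12 hΩ, d2_swap23 hΩ, neg_neg]

theorem isLinearMap_d2_fst (hlin : ∀ q w, IsLinearMap ℝ (fun v => Ω q v w))
    (hd : ∀ v w, DifferentiableAt ℝ (fun q => Ω q v w) p) (v2 v3 : E n) :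
    IsLinearMap ℝ (fun v1 => d2 Ω p v1 v2 v3) where
  map_add x y := by
    have h : ∀ w, (fun q => Ω q (x + y) w) = fun q => Ω q x w + Ω q y w :=
      fun w => funext fun q => (hlin q w).map_add x y
    simp only [d2, h, fderiv_fun_add (hd x _) (hd y _), map_add, add_apply]
    ring
  map_smul c x := by
    have h : ∀ w, (fun q => Ω q (c • x) w) = fun q => c * Ω q x w :=
      fun w => funext fun q => (hlin q w).map_smul c x
    simp only [d2, h, fderiv_const_mul (hd x _), map_smul, smul_apply, smul_eq_mul]
    ring

theorem isLinearMap_d2_snd (hΩ : ∀ q v w, Ω q w v = -Ω q v w)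
    (hlin : ∀ q w, IsLinearMap ℝ (fun v => Ω q v w))
    (hd : ∀ v w, DifferentiableAt ℝ (fun q => Ω q v w) p) (v1 v3 : E n) :
    IsLinearMap ℝ (fun v2 => d2 Ω p v1 v2 v3) := by
  have h := isLinearMap_d2_fst hlin hd v1 v3
  rw [show (fun v2 => d2 Ω p v1 v2 v3) = fun v2 => -d2 Ω p v2 v1 v3 from
    funext fun v2 => d2_swap12 hΩ p v2 v1 v3]
  exact ⟨fun x y => by rw [h.map_add, neg_add], fun c x => by rw [h.map_smul, smul_neg]⟩

theorem isLinearMap_d2_thd (hΩ : ∀ q v w, Ω q w v = -Ω q v w)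
    (hlin : ∀ q w, IsLinearMap ℝ (fun v => Ω q v w))
    (hd : ∀ v w, DifferentiableAt ℝ (fun q => Ω q v w) p) (v1 v2 : E n) :
    IsLinearMap ℝ (fun v3 => d2 Ω p v1 v2 v3) := by
  rw [show (fun v3 => d2 Ω p v1 v2 v3) = fun v3 => d2 Ω p v3 v1 v2 from
    funext fun v3 => (d2_rotate hΩ p v1 v2 v3).symm]
  exact isLinearMap_d2_fst hlin hd v1 v2

theorem differentiableAt_fderiv {f : E n → ℝ} (hf : ContDiffAt ℝ 2 f p) :
    DifferentiableAt ℝ (fderiv ℝ f) p :=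
  (hf.fderiv_right (m := 1) le_rfl).differentiableAt one_ne_zero

theorem differentiableAt_d2 (hΩ : ∀ v w, ContDiffAt ℝ 2 (fun q => Ω q v w) p)
    (v1 v2 v3 : E n) : DifferentiableAt ℝ (fun q => d2 Ω q v1 v2 v3) p := by
  have hd : ∀ v w x, DifferentiableAt ℝ (fun q => fderiv ℝ (fun q => Ω q v w) q x) p :=
    fun v w x => (differentiableAt_fderiv (hΩ v w)).clm_apply (differentiableAt_const x)
  exact ((hd _ _ _).fun_sub (hd _ _ _)).fun_add (hd _ _ _)

theorem fderiv_d2_apply (hΩ : ∀ v w, ContDiffAt ℝ 2 (fun q => Ω q v w) p)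
    (v1 v2 v3 z : E n) :
    fderiv ℝ (fun q => d2 Ω q v1 v2 v3) p z =
      fderiv ℝ (fderiv ℝ (fun q => Ω q v2 v3)) p z v1 -
        fderiv ℝ (fderiv ℝ (fun q => Ω q v1 v3)) p z v2 +
        fderiv ℝ (fderiv ℝ (fun q => Ω q v1 v2)) p z v3 := by
  have hd : ∀ v w x, DifferentiableAt ℝ (fun q => fderiv ℝ (fun q => Ω q v w) q x) p :=
    fun v w x => (differentiableAt_fderiv (hΩ v w)).clm_apply (differentiableAt_const x)
  simp only [d2]
  rw [fderiv_fun_add ((hd _ _ _).fun_sub (hd _ _ _)) (hd _ _ _),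
    fderiv_fun_sub (hd _ _ _) (hd _ _ _)]
  simp [fderiv_clm_apply (differentiableAt_fderiv (hΩ _ _)) (differentiableAt_const _)]

theorem d3_d2_eq_zero (hΩ : ∀ v w, ContDiffAt ℝ 2 (fun q => Ω q v w) p) (v0 v1 v2 v3 : E n) :
    d3 (d2 Ω) p v0 v1 v2 v3 = 0 := by
  have hsymm : ∀ v w x y, fderiv ℝ (fderiv ℝ (fun q => Ω q v w)) p x y =
      fderiv ℝ (fderiv ℝ (fun q => Ω q v w)) p y x :=
    fun v w => (hΩ v w).isSymmSndFDerivAt (by simp)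
  simp only [d3, fderiv_d2_apply hΩ]
  linarith [hsymm v2 v3 v0 v1, hsymm v1 v3 v0 v2, hsymm v1 v2 v0 v3, hsymm v0 v3 v1 v2,
    hsymm v0 v2 v1 v3, hsymm v0 v1 v2 v3]

end ExteriorDerivative

section InteriorProduct

variable {V W : Type*} [NormedAddCommGroup V] [NormedSpace ℝ V] [NormedAddCommGroup W]
  [NormedSpace ℝ W] [FiniteDimensional ℝ W]

theorem fderiv_apply_const_eq_neg_of_apply_eq_zero {T : V → W → ℝ} {X : V → W} {p : V}
    (hlin : ∀ᶠ q in 𝓝 p, IsLinearMap ℝ (T q)) (hT : ∀ w, DifferentiableAt ℝ (fun q => T q w) p)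
    (hX : DifferentiableAt ℝ X p) (h0 : ∀ᶠ q in 𝓝 p, T q (X q) = 0) (z : V) :
    fderiv ℝ (fun q => T q (X p)) p z = -T p (fderiv ℝ X p z) := by
  -- Expanding in a basis turns `T` into a differentiable family of continuous linear maps.
  let b := Module.finBasis ℝ W
  let Tc : V → W →L[ℝ] ℝ := fun q => ∑ i, T q (b i) • LinearMap.toContinuousLinearMap (b.coord i)
  have hTc : ∀ q, IsLinearMap ℝ (T q) → ∀ w, Tc q w = T q w := by
    intro q hq w
    have h := map_sum (IsLinearMap.mk' _ hq) (fun i => b.repr w i • b i) Finset.univ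
    simp only [IsLinearMap.mk'_apply, map_smul, b.sum_repr, smul_eq_mul] at h
    simp [Tc, h, mul_comm]
  have hTcd : DifferentiableAt ℝ Tc p :=
    DifferentiableAt.fun_sum fun i _ => (hT (b i)).smul_const _
  have heq : (fun q => T q (X p)) =ᶠ[𝓝 p] fun q => Tc q (X p) - Tc q (X q) := by
    filter_upwards [hlin, h0] with q hq hq0
    rw [hTc q hq, hTc q hq, hq0, sub_zero]
  rw [heq.fderiv_eq, fderiv_fun_sub (hTcd.clm_apply (differentiableAt_const _)) (hTcd.clm_apply hX),
    fderiv_clm_apply hTcd (differentiableAt_const _), fderiv_clm_apply hTcd hX]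
  simp [hTc p hlin.self_of_nhds]

end InteriorProduct

section Frame

variable {F : Fin n → E n → ℝ} {p : E n}

theorem apply_eq_of_eq_mod_vertical {f : E n → ℝ} (hf : IsLinearMap ℝ f)
    (hV : ∀ a, f (Vv a) = 0) {x y : E n} (h1 : x.1 = y.1) (h21 : x.2.1 = y.2.1) :
    f x = f y := by
  have hxy : x = y + ∑ a, (x.2.2 a - y.2.2 a) • Vv a := by
    refine Prod.ext ?_ (Prod.ext ?_ ?_)
    · simp [Vv, eu, h1, Prod.fst_sum]
    · simp [Vv, eu, h21, Prod.snd_sum, Prod.fst_sum]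
    · ext b
      simp [Vv, eu, Prod.snd_sum, Finset.sum_apply, Pi.single_apply]
  let L := IsLinearMap.mk' f hf
  calc f x = L (y + ∑ a, (x.2.2 a - y.2.2 a) • Vv a) := by rw [← hxy]; rfl
    _ = f y := by
      rw [map_add, map_sum]
      simp only [map_smul]
      simp [L, hV]

/-- The coefficients of `v` in the frame `(Γ, H_a, V_a)` are `dt(v)`, `θ^a(v)` and `ψ^a(v)`. -/
theorem eq_zero_of_frame {f : E n → ℝ} (hf : IsLinearMap ℝ f) (hΓ : f (GamV F p) = 0)
    (hH : ∀ a, f (Hv F a p) = 0) (hV : ∀ a, f (Vv a) = 0) (v : E n) : f v = 0 := by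
  let L := IsLinearMap.mk' f hf
  calc f v = L (v.1 • GamV F p + ∑ a, theta a p v • Hv F a p) := by
        refine apply_eq_of_eq_mod_vertical hf hV ?_ ?_
        · simp [GamV, Hv, Prod.fst_sum]
        · ext b
          simp [GamV, Hv, theta, Prod.snd_sum, Prod.fst_sum, Finset.sum_apply, Pi.single_apply]
          ring
    _ = 0 := by
      rw [map_add, map_sum]
      simp only [map_smul]
      simp [L, hΓ, hH]

theorem hasFDerivAt_gamV (hF : ∀ a, DifferentiableAt ℝ (F a) p) :
    HasFDerivAt (GamV F) ((0 : E n →L[ℝ] ℝ).prod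
      (((ContinuousLinearMap.snd ℝ _ _).comp (ContinuousLinearMap.snd ℝ _ _)).prod
        (ContinuousLinearMap.pi fun a => fderiv ℝ (F a) p))) p :=
  (hasFDerivAt_const _ _).prodMk
    ((((ContinuousLinearMap.snd ℝ _ _).comp (ContinuousLinearMap.snd ℝ _ _)).hasFDerivAt).prodMk
      (hasFDerivAt_pi.2 fun a => (hF a).hasFDerivAt))

theorem apply_fderiv_gamV_vv {f : E n → ℝ} (hf : IsLinearMap ℝ f) (hV : ∀ a, f (Vv a) = 0)
    (hF : ∀ a, DifferentiableAt ℝ (F a) p) (b : Fin n) :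
    f (fderiv ℝ (GamV F) p (Vv b)) = f (Hv F b p) := by
  rw [(hasFDerivAt_gamV hF).fderiv]
  exact apply_eq_of_eq_mod_vertical hf hV rfl rfl

end Frame

structure IsC2TwoFormOn (U : Set (E n)) (Ω : E n → E n → E n → ℝ) : Prop where
  antisymm : ∀ q v w, Ω q w v = -Ω q v w
  isLinearMap_fst : ∀ q w, IsLinearMap ℝ (fun v => Ω q v w)
  contDiffAt : ∀ q ∈ U, ∀ v w, ContDiffAt ℝ 2 (fun q => Ω q v w) q

section OmegaG

variable {U : Set (E n)} {F : Fin n → E n → ℝ} {g : Fin n → Fin n → E n → ℝ}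

theorem isLinearMap_theta (b : Fin n) (q : E n) : IsLinearMap ℝ (theta b q) :=
  ⟨fun v w => by simp [theta]; ring, fun c v => by simp [theta]; ring⟩

theorem isLinearMap_psi (a : Fin n) (q : E n) : IsLinearMap ℝ (psi F a q) :=
  ⟨fun v w => by
    simp [psi, (isLinearMap_theta _ q).map_add, mul_add, Finset.sum_add_distrib]
    ring,
   fun c v => by
    simp only [psi, (isLinearMap_theta _ q).map_smul, smul_eq_mul, Prod.smul_fst, Prod.smul_snd,
      Pi.smul_apply, mul_add, Finset.mul_sum]
    ring_nf⟩

theorem isC2TwoFormOn_omegaG (hU : IsOpen U) (hF : ∀ a, ContDiffOn ℝ (⊤ : ℕ∞) (F a) U)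
    (hg : ∀ a b, ContDiffOn ℝ (⊤ : ℕ∞) (g a b) U) : IsC2TwoFormOn U (OmegaG F g) where
  antisymm q v w := by
    simp only [OmegaG, w11, ← Finset.sum_neg_distrib]
    congr! 2
    ring
  isLinearMap_fst q w :=
    ⟨fun v v' => by
      simp only [OmegaG, w11, (isLinearMap_psi _ q).map_add, (isLinearMap_theta _ q).map_add,
        ← Finset.sum_add_distrib]
      congr! 2
      ring,
    fun c v => by
      simp only [OmegaG, w11, (isLinearMap_psi _ q).map_smul, (isLinearMap_theta _ q).map_smul,
        smul_eq_mul, Finset.mul_sum]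
      congr! 2
      ring⟩
  contDiffAt q hq v w := by
    have hGc : ∀ a b, ContDiffOn ℝ (⊤ : ℕ∞) (Gc F a b) U := fun a b =>
      contDiffOn_const.mul (((hF a).fderiv_of_isOpen hU (WithTop.coe_le_coe.2 le_top)).clm_apply
        contDiffOn_const)
    have h : ContDiffOn ℝ (⊤ : ℕ∞) (fun q => OmegaG F g q v w) U := by
      unfold OmegaG w11 psi theta
      fun_prop
    exact (h.contDiffAt (hU.mem_nhds hq)).of_le (WithTop.coe_le_coe.2 le_top)

theorem omegaG_vv_vv_eq_zero (q : E n) (a b : Fin n) : OmegaG F g q (Vv a) (Vv b) = 0 := by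
  simp [OmegaG, w11, theta, Vv, eu]

end OmegaG

namespace IsC2TwoFormOn

variable {U : Set (E n)} {Ω : E n → E n → E n → ℝ} {p : E n}

theorem isLinearMap_d2_fst (hΩ : IsC2TwoFormOn U Ω) (hp : p ∈ U) (v2 v3 : E n) :
    IsLinearMap ℝ (fun v1 => d2 Ω p v1 v2 v3) :=
  IP.isLinearMap_d2_fst hΩ.isLinearMap_fst
    (fun v w => (hΩ.contDiffAt p hp v w).differentiableAt two_ne_zero) v2 v3

theorem isLinearMap_d2_snd (hΩ : IsC2TwoFormOn U Ω) (hp : p ∈ U) (v1 v3 : E n) :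
    IsLinearMap ℝ (fun v2 => d2 Ω p v1 v2 v3) :=
  IP.isLinearMap_d2_snd hΩ.antisymm hΩ.isLinearMap_fst
    (fun v w => (hΩ.contDiffAt p hp v w).differentiableAt two_ne_zero) v1 v3

theorem isLinearMap_d2_thd (hΩ : IsC2TwoFormOn U Ω) (hp : p ∈ U) (v1 v2 : E n) :
    IsLinearMap ℝ (fun v3 => d2 Ω p v1 v2 v3) :=
  IP.isLinearMap_d2_thd hΩ.antisymm hΩ.isLinearMap_fst
    (fun v w => (hΩ.contDiffAt p hp v w).differentiableAt two_ne_zero) v1 v2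

end IsC2TwoFormOn

theorem eq_zero_of_symm_of_antisymm {ι : Type*} {S : ι → ι → ι → ℝ}
    (hs : ∀ a b c, S a b c = S c b a) (ha : ∀ a b c, S b a c = -S a b c) (a b c : ι) :
    S a b c = 0 := by
  linarith [hs a b c, ha b c a, hs a c b, ha c a b, hs b a c, ha a b c]

section Closedness

variable {U : Set (E n)} {F : Fin n → E n → ℝ} {Ω : E n → E n → E n → ℝ} {p : E n}

theorem fderiv_d2_gamV (hΩ : IsC2TwoFormOn U Ω) (hU : IsOpen U) (hp : p ∈ U)
    (hF : ∀ a, DifferentiableAt ℝ (F a) p)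
    (hi : ∀ q ∈ U, ∀ v w, d2 Ω q (GamV F q) v w = 0) (v w z : E n) :
    fderiv ℝ (fun q => d2 Ω q (GamV F p) v w) p z = -d2 Ω p (fderiv ℝ (GamV F) p z) v w :=
  fderiv_apply_const_eq_neg_of_apply_eq_zero (T := fun q x => d2 Ω q x v w)
    (Filter.eventually_of_mem (hU.mem_nhds hp) fun _ hq => hΩ.isLinearMap_d2_fst hq v w)
    (fun x => differentiableAt_d2 (hΩ.contDiffAt p hp) x v w) (hasFDerivAt_gamV hF).differentiableAt
    (Filter.eventually_of_mem (hU.mem_nhds hp) fun q hq => hi q hq v w) z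

theorem d2_gamV_eq_zero (hΩ : IsC2TwoFormOn U Ω) (hp : p ∈ U)
    (h1 : ∀ a b, d2 Ω p (GamV F p) (Vv a) (Vv b) = 0)
    (h2 : ∀ a b, d2 Ω p (GamV F p) (Vv a) (Hv F b p) = 0)
    (h3 : ∀ a b, d2 Ω p (GamV F p) (Hv F a p) (Hv F b p) = 0) (v w : E n) :
    d2 Ω p (GamV F p) v w = 0 := by
  have hΓ : ∀ v, d2 Ω p (GamV F p) v (GamV F p) = 0 := fun v => by
    linarith [d2_swap12 hΩ.antisymm p (GamV F p) (GamV F p) v,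
      d2_swap23 hΩ.antisymm p (GamV F p) v (GamV F p)]
  refine eq_zero_of_frame (F := F) (p := p) (hΩ.isLinearMap_d2_snd hp _ w) ?_ (fun a => ?_)
    (fun a => ?_) v
  · linarith [d2_swap12 hΩ.antisymm p (GamV F p) (GamV F p) w]
  · refine eq_zero_of_frame (hΩ.isLinearMap_d2_thd hp _ _) (hΓ _) (h3 a) (fun b => ?_) w
    rw [← neg_eq_zero, ← d2_swap23 hΩ.antisymm, h2]
  · exact eq_zero_of_frame (hΩ.isLinearMap_d2_thd hp _ _) (hΓ _) (h2 a) (h1 a) w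

theorem d2_vv_vv_vv_eq_zero (hVV : ∀ q a b, Ω q (Vv a) (Vv b) = 0) (a b c : Fin n) :
    d2 Ω p (Vv a) (Vv b) (Vv c) = 0 := by
  simp [d2, hVV]

theorem d2_vv_vv_eq_zero (hΩ : IsC2TwoFormOn U Ω) (hp : p ∈ U)
    (hi : ∀ v w, d2 Ω p (GamV F p) v w = 0)
    (h4 : ∀ a b c, d2 Ω p (Hv F a p) (Vv b) (Vv c) = 0)
    (hVV : ∀ q a b, Ω q (Vv a) (Vv b) = 0) (u : E n) (b c : Fin n) :
    d2 Ω p u (Vv b) (Vv c) = 0 :=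
  eq_zero_of_frame (hΩ.isLinearMap_d2_fst hp _ _) (hi _ _) (fun a => h4 a b c)
    (fun a => d2_vv_vv_vv_eq_zero hVV a b c) u

theorem d2_hv_hv_vv_symm (hΩ : IsC2TwoFormOn U Ω) (hU : IsOpen U) (hp : p ∈ U)
    (hF : ∀ a, DifferentiableAt ℝ (F a) p) (hi : ∀ q ∈ U, ∀ v w, d2 Ω q (GamV F q) v w = 0)
    (hvv : ∀ q ∈ U, ∀ u b c, d2 Ω q u (Vv b) (Vv c) = 0) (a b c : Fin n) :
    d2 Ω p (Hv F b p) (Hv F a p) (Vv c) = d2 Ω p (Hv F c p) (Hv F a p) (Vv b) := by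
  have hdd := d3_d2_eq_zero (hΩ.contDiffAt p hp) (GamV F p) (Hv F a p) (Vv b) (Vv c)
  have h0 : fderiv ℝ (fun q => d2 Ω q (Hv F a p) (Vv b) (Vv c)) p = 0 :=
    (Filter.eventuallyEq_of_mem (hU.mem_nhds hp) fun q hq => hvv q hq _ b c).fderiv_eq.trans
      (fderiv_const_apply 0)
  have hΓV : ∀ x c, d2 Ω p (fderiv ℝ (GamV F) p (Vv x)) (Hv F a p) (Vv c) =
      d2 Ω p (Hv F x p) (Hv F a p) (Vv c) := fun x c =>
    apply_fderiv_gamV_vv (hΩ.isLinearMap_d2_fst hp _ _)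
      (fun d => by rw [d2_swap12 hΩ.antisymm, hvv p hp, neg_zero]) hF x
  simp only [d3, h0, fderiv_d2_gamV hΩ hU hp hF hi, hvv p hp, hΓV, zero_apply, neg_zero,
    sub_self, zero_add, sub_neg_eq_add] at hdd
  linarith

theorem d2_hv_hv_vv_eq_zero (hΩ : IsC2TwoFormOn U Ω) (hU : IsOpen U) (hp : p ∈ U)
    (hF : ∀ a, DifferentiableAt ℝ (F a) p) (hi : ∀ q ∈ U, ∀ v w, d2 Ω q (GamV F q) v w = 0)
    (hvv : ∀ q ∈ U, ∀ u b c, d2 Ω q u (Vv b) (Vv c) = 0) (a b c : Fin n) :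
    d2 Ω p (Hv F a p) (Hv F b p) (Vv c) = 0 :=
  eq_zero_of_symm_of_antisymm (S := fun a b c => d2 Ω p (Hv F a p) (Hv F b p) (Vv c))
    (fun x y z => d2_hv_hv_vv_symm hΩ hU hp hF hi hvv y x z)
    (fun _ _ _ => d2_swap12 hΩ.antisymm p _ _ _) a b c

theorem d2_vv_eq_zero (hΩ : IsC2TwoFormOn U Ω) (hp : p ∈ U)
    (hi : ∀ v w, d2 Ω p (GamV F p) v w = 0) (hvv : ∀ u b c, d2 Ω p u (Vv b) (Vv c) = 0)
    (hhv : ∀ a b c, d2 Ω p (Hv F a p) (Hv F b p) (Vv c) = 0) (u w : E n) (c : Fin n) :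
    d2 Ω p u w (Vv c) = 0 := by
  refine eq_zero_of_frame (F := F) (p := p) (hΩ.isLinearMap_d2_snd hp u (Vv c)) ?_
    (fun b => ?_) (fun b => hvv u b c) w
  · rw [← neg_eq_zero, ← d2_swap12 hΩ.antisymm, hi]
  · refine eq_zero_of_frame (hΩ.isLinearMap_d2_fst hp _ _) (hi _ _) (fun a => hhv a b c)
      (fun a => ?_) u
    rw [← neg_eq_zero, ← d2_swap12 hΩ.antisymm, hvv]

theorem d2_hv_hv_hv_eq_zero (hΩ : IsC2TwoFormOn U Ω) (hU : IsOpen U) (hp : p ∈ U)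
    (hF : ∀ a, DifferentiableAt ℝ (F a) p) (hi : ∀ q ∈ U, ∀ v w, d2 Ω q (GamV F q) v w = 0)
    (hv : ∀ q ∈ U, ∀ u w c, d2 Ω q u w (Vv c) = 0) (a b c : Fin n) :
    d2 Ω p (Hv F a p) (Hv F b p) (Hv F c p) = 0 := by
  have hdd := d3_d2_eq_zero (hΩ.contDiffAt p hp) (GamV F p) (Hv F b p) (Hv F c p) (Vv a)
  have h0 : fderiv ℝ (fun q => d2 Ω q (Hv F b p) (Hv F c p) (Vv a)) p = 0 :=
    (Filter.eventuallyEq_of_mem (hU.mem_nhds hp) fun q hq => hv q hq _ _ a).fderiv_eq.trans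
      (fderiv_const_apply 0)
  have hΓV : d2 Ω p (fderiv ℝ (GamV F) p (Vv a)) (Hv F b p) (Hv F c p) =
      d2 Ω p (Hv F a p) (Hv F b p) (Hv F c p) :=
    apply_fderiv_gamV_vv (hΩ.isLinearMap_d2_fst hp _ _)
      (fun d => by rw [d2_rotate hΩ.antisymm, hv p hp]) hF a
  simp only [d3, h0, fderiv_d2_gamV hΩ hU hp hF hi, hv p hp, hΓV, zero_apply, neg_zero,
    sub_self, add_zero, sub_neg_eq_add, zero_add] at hdd
  linarith

theorem d2_eq_zero (hΩ : IsC2TwoFormOn U Ω) (hp : p ∈ U)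
    (hi : ∀ v w, d2 Ω p (GamV F p) v w = 0) (hv : ∀ u w c, d2 Ω p u w (Vv c) = 0)
    (hhh : ∀ a b c, d2 Ω p (Hv F a p) (Hv F b p) (Hv F c p) = 0) (u v w : E n) :
    d2 Ω p u v w = 0 := by
  refine eq_zero_of_frame (F := F) (p := p) (hΩ.isLinearMap_d2_thd hp u v) ?_ (fun c => ?_)
    (hv u v) w
  · rw [← d2_rotate hΩ.antisymm, hi]
  refine eq_zero_of_frame (F := F) (p := p) (hΩ.isLinearMap_d2_snd hp u _) ?_ (fun b => ?_)
    (fun b => ?_) v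
  · rw [← neg_eq_zero, ← d2_swap12 hΩ.antisymm, hi]
  · exact eq_zero_of_frame (hΩ.isLinearMap_d2_fst hp _ _) (hi _ _) (fun a => hhh a b c)
      (fun a => by rw [d2_rotate hΩ.antisymm, hv]) u
  · rw [← neg_eq_zero, ← d2_swap23 hΩ.antisymm, hv]

end Closedness

/-- for Ω = g_{ab} ψ^a ∧ θ^b, the four conditions
dΩ(Γ,V,V) = dΩ(Γ,V,H) = dΩ(Γ,H,H) = dΩ(H,V,V) = 0 imply the remaining ones
dΩ(H,H,V) = dΩ(H,H,H) = 0, and consequently dΩ = 0 on U. -/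
theorem stmt4 {n : ℕ} (U : Set (E n)) (hU : IsOpen U) (F : Fin n → E n → ℝ)
    (hF : ∀ a, ContDiffOn ℝ (⊤ : ℕ∞) (F a) U) (g : Fin n → Fin n → E n → ℝ)
    (hg : ∀ a b, ContDiffOn ℝ (⊤ : ℕ∞) (g a b) U)
    (h1 : ∀ p ∈ U, ∀ a b, d2 (OmegaG F g) p (GamV F p) (Vv a) (Vv b) = 0)
    (h2 : ∀ p ∈ U, ∀ a b, d2 (OmegaG F g) p (GamV F p) (Vv a) (Hv F b p) = 0)
    (h3 : ∀ p ∈ U, ∀ a b, d2 (OmegaG F g) p (GamV F p) (Hv F a p) (Hv F b p) = 0)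
    (h4 : ∀ p ∈ U, ∀ a b c, d2 (OmegaG F g) p (Hv F a p) (Vv b) (Vv c) = 0) :
    (∀ p ∈ U, ∀ a b c, d2 (OmegaG F g) p (Hv F a p) (Hv F b p) (Vv c) = 0 ∧
        d2 (OmegaG F g) p (Hv F a p) (Hv F b p) (Hv F c p) = 0) ∧
    (∀ p ∈ U, ∀ v1 v2 v3 : E n, d2 (OmegaG F g) p v1 v2 v3 = 0) := by
  have hΩ := isC2TwoFormOn_omegaG hU hF hg
  have hFd : ∀ p ∈ U, ∀ a, DifferentiableAt ℝ (F a) p := fun p hp a =>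
    ((hF a).contDiffAt (hU.mem_nhds hp)).differentiableAt (by simp)
  have hi : ∀ p ∈ U, ∀ v w, d2 (OmegaG F g) p (GamV F p) v w = 0 := fun p hp =>
    d2_gamV_eq_zero hΩ hp (h1 p hp) (h2 p hp) (h3 p hp)
  have hvv : ∀ p ∈ U, ∀ u b c, d2 (OmegaG F g) p u (Vv b) (Vv c) = 0 := fun p hp =>
    d2_vv_vv_eq_zero hΩ hp (hi p hp) (h4 p hp) omegaG_vv_vv_eq_zero
  have hhv : ∀ p ∈ U, ∀ a b c, d2 (OmegaG F g) p (Hv F a p) (Hv F b p) (Vv c) = 0 :=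
    fun p hp => d2_hv_hv_vv_eq_zero hΩ hU hp (hFd p hp) hi hvv
  have hv : ∀ p ∈ U, ∀ u w c, d2 (OmegaG F g) p u w (Vv c) = 0 := fun p hp =>
    d2_vv_eq_zero hΩ hp (hi p hp) (hvv p hp) (hhv p hp)
  have hhh : ∀ p ∈ U, ∀ a b c, d2 (OmegaG F g) p (Hv F a p) (Hv F b p) (Hv F c p) = 0 :=
    fun p hp => d2_hv_hv_hv_eq_zero hΩ hU hp (hFd p hp) hi hv
  exact ⟨fun p hp a b c => ⟨hhv p hp a b c, hhh p hp a b c⟩,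
    fun p hp => d2_eq_zero hΩ hp (hi p hp) (hv p hp) (hhh p hp)⟩

end IP
end
end

section
/- The Lie bracket of the horizontal vector fields satisfies [H_a, H_b] = R^d_{ab} V_d on U, where R^d_{ab} := (1/2)( ∂²F^d/∂x^a∂u^b − ∂²F^d/∂x^b∂u^a + (1/2)( ∂F^c/∂u^a · ∂²F^d/∂u^c∂u^b − ∂F^c/∂u^b · ∂²F^d/∂u^c∂u^a ) ). -/
/- Setting: the evolution space E = ℝ × ℝ^n × ℝ^n with coordinates (t, x^a, u^a),
   a SODE ẍ^a = F^a(t,x,ẋ), and all the associated geometric objects. -/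

noncomputable section

/-! Since the `x`-part of `H_a = ∂/∂x^a - Γ^c_a ∂/∂u^c` is constant, `[H_a, H_b]` is vertical,
with `d`-th component `H_a(-Γ^d_b) - H_b(-Γ^d_a)`. Expanding `H_a` along the coordinate fields
and `Γ^d_b = -(1/2) ∂F^d/∂u^b` turns this component into `R^d_{ab}`. -/

theorem differentiableAt_fderiv_apply {𝕜 E F : Type*} [NontriviallyNormedField 𝕜]
    [NormedAddCommGroup E] [NormedSpace 𝕜 E] [NormedAddCommGroup F] [NormedSpace 𝕜 F]
    {f : E → F} {p : E} (hf : ContDiffAt 𝕜 2 f p) (v : E) :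
    DifferentiableAt 𝕜 (fun q => fderiv 𝕜 f q v) p :=
  ((hf.fderiv_right le_rfl).differentiableAt one_ne_zero).clm_apply (differentiableAt_const v)

namespace IP

variable {n : ℕ} {F : Fin n → E n → ℝ} {p : E n} {c : Fin n}

theorem differentiableAt_Gc (hF : ContDiffAt ℝ 2 (F c) p) (a : Fin n) :
    DifferentiableAt ℝ (Gc F c a) p :=
  (differentiableAt_fderiv_apply hF (eu a)).const_mul _

theorem fderiv_Gc_apply (hF : ContDiffAt ℝ 2 (F c) p) (a : Fin n) (v : E n) :
    fderiv ℝ (Gc F c a) p v = -(1 / 2) * fderiv ℝ (fun q => fderiv ℝ (F c) q (eu a)) p v := by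
  unfold Gc
  rw [fderiv_const_mul (differentiableAt_fderiv_apply hF (eu a))]
  rfl

theorem Hv_eq_sum (F : Fin n → E n → ℝ) (a : Fin n) :
    Hv F a = fun q => ex a + ∑ c, (-Gc F c a q) • eu c := by
  funext q
  ext
  · simp [Hv, ex, eu, Prod.fst_sum]
  · simp [Hv, ex, eu, Prod.fst_sum, Prod.snd_sum]
  · simp [Hv, ex, eu, Prod.snd_sum, Finset.sum_apply, Pi.single_apply]

theorem fderiv_Hv_apply (hF : ∀ c, ContDiffAt ℝ 2 (F c) p) (a : Fin n) (v : E n) :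
    fderiv ℝ (Hv F a) p v = ∑ c, (-fderiv ℝ (Gc F c a) p v) • eu c := by
  have hGc : ∀ c, HasFDerivAt (fun q => (-Gc F c a q) • eu c)
      ((-fderiv ℝ (Gc F c a) p).smulRight (eu c)) p := fun c =>
    (differentiableAt_Gc (hF c) a).hasFDerivAt.neg.smul_const (eu c)
  rw [Hv_eq_sum, ((HasFDerivAt.fun_sum fun c _ => hGc c).const_add (ex a)).fderiv]
  simp

theorem lie_Hv_Hv (hF : ∀ c, ContDiffAt ℝ 2 (F c) p) (a b : Fin n) :
    lie (Hv F a) (Hv F b) p =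
      ∑ c, (fderiv ℝ (Gc F c a) p (Hv F b p) - fderiv ℝ (Gc F c b) p (Hv F a p)) • eu c := by
  simp only [lie, fderiv_Hv_apply hF, ← Finset.sum_sub_distrib, ← sub_smul]
  congr! 2
  ring

theorem Rcoord_eq_fderiv_Gc (hF : ∀ c, ContDiffAt ℝ 2 (F c) p) (d a b : Fin n) :
    Rcoord F d a b p =
      fderiv ℝ (Gc F d a) p (Hv F b p) - fderiv ℝ (Gc F d b) p (Hv F a p) := by
  simp only [fderiv_Gc_apply (hF d), Hv_eq_sum, map_add, map_sum, map_smul, smul_eq_mul, Gc,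
    Rcoord]
  simp only [neg_mul, neg_neg, mul_assoc, ← Finset.mul_sum]
  ring

/-- [H_a, H_b] = R^d_{ab} V_d. -/
theorem stmt5 {n : ℕ} (U : Set (E n)) (hU : IsOpen U) (F : Fin n → E n → ℝ)
    (hF : ∀ a, ContDiffOn ℝ (⊤ : ℕ∞) (F a) U) :
    ∀ p ∈ U, ∀ a b : Fin n,
      lie (Hv F a) (Hv F b) p = ∑ d, Rcoord F d a b p • Vv d := by
  intro p hp a b
  have hF2 : ∀ c, ContDiffAt ℝ 2 (F c) p := fun c =>
    ((hF c).contDiffAt (hU.mem_nhds hp)).of_le (WithTop.coe_le_coe.2 le_top)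
  simp only [lie_Hv_Hv hF2, Rcoord_eq_fderiv_Gc hF2, Vv]

end IP
end
end

section
/- Consider the SODE in dimension n = 3 given by ẍ = xẏ, ÿ = ẋ, z̈ = 0, i.e. F¹ = x v, F² = u, F³ = 0 in coordinates (t, x, y, z, u, v, w). Let W be any nonempty open subset of {(t,x,y,z,u,v,w) ∈ ℝ⁷ : v > 0, u ≠ 0, x ≠ 0, 4v + x ≠ 0}. Then there is no smooth symmetric matrix-valued function g = (g_{ab}) on W satisfying the four Helmholtz conditions with det g(p) ≠ 0 at some point p ∈ W; that is, this system admits no regular Lagrangian multiplier on W. -/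
/- Setting: the evolution space E = ℝ × ℝ^n × ℝ^n with coordinates (t, x^a, u^a),
   a SODE ẍ^a = F^a(t,x,ẋ), and all the associated geometric objects. -/

noncomputable section

namespace IP
/-! Indices 0, 1, 2 stand for x, y, z. The algebraic condition that gΦ be symmetric gives
g₂₀ = 0 and u g₀₀ + 2v g₀₁ = 0 on W. As W is open, the Γ-derivative of such a relation vanishes
as well, and the condition Γ(g) = gΓ + (gΓ)ᵀ turns it into a new algebraic relation: first
u g₀₁ - v g₁₁ = 0, then 2xv g₀₁ - u g₁₁ = 0. Eliminating g₁₁ gives g₀₁ (u² - 2xv²) = 0.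
If g₀₁(p) = 0, the first row of g(p) vanishes and det g(p) = 0; otherwise g₀₁ ≠ 0 near p, so
u² = 2xv² on a neighbourhood of p, which is impossible because its ∂/∂u is 2u ≠ 0. -/

open Topology

lemma fderiv_position {n : ℕ} (a : Fin n) (p v : E n) :
    fderiv ℝ (fun q : E n => q.2.1 a) p v = v.2.1 a :=
  congrArg (· v) (((ContinuousLinearMap.proj a).comp ((ContinuousLinearMap.fst ℝ _ _).comp
    (ContinuousLinearMap.snd ℝ ℝ _))).hasFDerivAt (x := p)).fderiv

lemma fderiv_velocity {n : ℕ} (a : Fin n) (p v : E n) :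
    fderiv ℝ (fun q : E n => q.2.2 a) p v = v.2.2 a :=
  congrArg (· v) (((ContinuousLinearMap.proj a).comp ((ContinuousLinearMap.snd ℝ _ _).comp
    (ContinuousLinearMap.snd ℝ ℝ _))).hasFDerivAt (x := p)).fderiv

section GammaCalculus

variable {n : ℕ} (F : Fin n → E n → ℝ) {f h : E n → ℝ} {p : E n}

lemma Gam_add (hf : DifferentiableAt ℝ f p) (hh : DifferentiableAt ℝ h p) :
    Gam F (fun q => f q + h q) p = Gam F f p + Gam F h p := by
  simp [Gam, fderiv_fun_add hf hh]

lemma Gam_sub (hf : DifferentiableAt ℝ f p) (hh : DifferentiableAt ℝ h p) :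
    Gam F (fun q => f q - h q) p = Gam F f p - Gam F h p := by
  simp [Gam, fderiv_fun_sub hf hh]

lemma Gam_mul (hf : DifferentiableAt ℝ f p) (hh : DifferentiableAt ℝ h p) :
    Gam F (fun q => f q * h q) p = Gam F f p * h p + f p * Gam F h p := by
  simp only [Gam, fderiv_fun_mul hf hh, add_apply, smul_apply, smul_eq_mul]
  ring

lemma Gam_const_mul (hf : DifferentiableAt ℝ f p) (c : ℝ) :
    Gam F (fun q => c * f q) p = c * Gam F f p := by
  simp [Gam, fderiv_const_mul hf]

lemma Gam_const (c : ℝ) : Gam F (fun _ => c) p = 0 := by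
  simp [Gam]

lemma Gam_position (a : Fin n) : Gam F (fun q => q.2.1 a) p = p.2.2 a :=
  fderiv_position a p _

lemma Gam_velocity (a : Fin n) : Gam F (fun q => q.2.2 a) p = F a p :=
  fderiv_velocity a p _

lemma Gam_eq_zero_of_eqOn_zero {W : Set (E n)} (hW : IsOpen W) (hp : p ∈ W)
    (hf : Set.EqOn f 0 W) : Gam F f p = 0 := by
  rw [Gam, (Filter.eventuallyEq_of_mem (hW.mem_nhds hp) hf).fderiv_eq]
  simp

end GammaCalculus

abbrev sodeF : Fin 3 → E 3 → ℝ :=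
  ![fun p => p.2.1 0 * p.2.2 1, fun p => p.2.2 0, fun _ => 0]

lemma fderiv_sodeF (a : Fin 3) (p v : E 3) :
    fderiv ℝ (sodeF a) p v = ![v.2.1 0 * p.2.2 1 + p.2.1 0 * v.2.2 1, v.2.2 0, 0] a := by
  fin_cases a
  · change fderiv ℝ (fun q : E 3 => q.2.1 0 * q.2.2 1) p v = _
    rw [fderiv_fun_mul (by fun_prop) (by fun_prop)]
    simp [fderiv_position, fderiv_velocity]
    ring
  · exact fderiv_velocity 0 p v
  · simp

lemma Gc_sodeF (a b : Fin 3) (p : E 3) :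
    Gc sodeF a b p = ![![0, -p.2.1 0 / 2, 0], ![-1 / 2, 0, 0], ![0, 0, 0]] a b := by
  rw [Gc, fderiv_sodeF]
  fin_cases a <;> fin_cases b <;> simp [eu] <;> ring

lemma Gam_Gc_sodeF (a b : Fin 3) (p : E 3) :
    Gam sodeF (Gc sodeF a b) p = ![![0, -p.2.2 0 / 2, 0], ![0, 0, 0], ![0, 0, 0]] a b := by
  rw [show Gc sodeF a b = _ from funext (Gc_sodeF a b)]
  fin_cases a <;> fin_cases b
  all_goals simp only [Fin.zero_eta, Fin.mk_one, Fin.reduceFinMk, Matrix.cons_val, Gam_const]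
  rw [show (fun q : E 3 => -q.2.1 0 / 2) = fun q => (-1 / 2) * q.2.1 0 by ext; ring,
    Gam_const_mul _ (by fun_prop), Gam_position]
  ring

lemma Phi_sodeF (a b : Fin 3) (p : E 3) :
    Phi sodeF a b p =
      ![![-p.2.2 1 - p.2.1 0 / 4, p.2.2 0 / 2, 0], ![0, -p.2.1 0 / 4, 0], ![0, 0, 0]] a b := by
  simp only [Phi, Fin.sum_univ_three, Gc_sodeF, Gam_Gc_sodeF, fderiv_sodeF]
  fin_cases a <;> fin_cases b <;> simp [ex] <;> ring

lemma velocity_eq_zero_of_eventually_eq {p : E 3}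
    (h : ∀ᶠ q in 𝓝 p, q.2.2 0 ^ 2 - 2 * q.2.1 0 * q.2.2 1 ^ 2 = 0) : p.2.2 0 = 0 := by
  have hf := congrArg (· (eu 0)) (Filter.EventuallyEq.fderiv_eq (𝕜 := ℝ) h)
  simp (disch := fun_prop) only [fderiv_fun_sub, fderiv_fun_mul, fderiv_fun_pow] at hf
  simpa [fderiv_position, fderiv_velocity, eu] using hf

namespace Helmholtz

variable {W : Set (E 3)} {g : Fin 3 → Fin 3 → E 3 → ℝ} {q : E 3}

lemma sodeF_g20_eq_zero (hH : Helmholtz sodeF W g) (hq : q ∈ W)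
    (hvx : 4 * q.2.2 1 + q.2.1 0 ≠ 0) : g 2 0 q = 0 := by
  have h := hH.2.2.1 q hq 0 2
  simp only [Fin.sum_univ_three, Phi_sodeF, Matrix.cons_val_zero, Matrix.cons_val_one,
    Matrix.cons_val_two, Matrix.head_cons, Matrix.tail_cons] at h
  have h' : g 2 0 q * (4 * q.2.2 1 + q.2.1 0) = 0 := by linear_combination 4 * h
  exact (mul_eq_zero.mp h').resolve_right hvx

lemma sodeF_u_g00_add_two_v_g01 (hH : Helmholtz sodeF W g) (hq : q ∈ W) :
    q.2.2 0 * g 0 0 q + 2 * (q.2.2 1 * g 0 1 q) = 0 := by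
  have h := hH.2.2.1 q hq 0 1
  simp only [Fin.sum_univ_three, Phi_sodeF, Matrix.cons_val_zero, Matrix.cons_val_one,
    Matrix.cons_val_two, Matrix.head_cons, Matrix.tail_cons] at h
  linear_combination 2 * h - (2 * q.2.2 1 + q.2.1 0 / 2) * hH.1 q hq 1 0

lemma sodeF_Gam_g00 (hH : Helmholtz sodeF W g) (hq : q ∈ W) :
    Gam sodeF (g 0 0) q = -g 0 1 q := by
  rw [hH.2.1 q hq 0 0]
  simp only [Fin.sum_univ_three, Gc_sodeF, Matrix.cons_val_zero, Matrix.cons_val_one,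
    Matrix.cons_val_two, Matrix.head_cons, Matrix.tail_cons]
  ring

lemma sodeF_Gam_g01 (hH : Helmholtz sodeF W g) (hq : q ∈ W) :
    Gam sodeF (g 0 1) q = -(q.2.1 0 / 2) * g 0 0 q - g 1 1 q / 2 := by
  rw [hH.2.1 q hq 0 1]
  simp only [Fin.sum_univ_three, Gc_sodeF, Matrix.cons_val_zero, Matrix.cons_val_one,
    Matrix.cons_val_two, Matrix.head_cons, Matrix.tail_cons]
  ring

lemma sodeF_Gam_g11 (hH : Helmholtz sodeF W g) (hq : q ∈ W) :
    Gam sodeF (g 1 1) q = -q.2.1 0 * g 0 1 q := by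
  rw [hH.2.1 q hq 1 1]
  simp only [Fin.sum_univ_three, Gc_sodeF, Matrix.cons_val_zero, Matrix.cons_val_one,
    Matrix.cons_val_two, Matrix.head_cons, Matrix.tail_cons]
  linear_combination -q.2.1 0 * hH.1 q hq 1 0

lemma sodeF_u_g01_sub_v_g11 (hH : Helmholtz sodeF W g) (hW : IsOpen W)
    (hg : ∀ a b, DifferentiableOn ℝ (g a b) W) (hq : q ∈ W) :
    q.2.2 0 * g 0 1 q - q.2.2 1 * g 1 1 q = 0 := by
  have hd : ∀ a b, DifferentiableAt ℝ (g a b) q := fun a b =>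
    (hg a b).differentiableAt (hW.mem_nhds hq)
  have h := Gam_eq_zero_of_eqOn_zero sodeF hW hq
    (f := fun r => r.2.2 0 * g 0 0 r + 2 * (r.2.2 1 * g 0 1 r))
    fun r hr => hH.sodeF_u_g00_add_two_v_g01 hr
  rw [Gam_add _ (by fun_prop) (by fun_prop), Gam_mul _ (by fun_prop) (by fun_prop),
    Gam_const_mul _ (by fun_prop), Gam_mul _ (by fun_prop) (by fun_prop), Gam_velocity,
    Gam_velocity, hH.sodeF_Gam_g00 hq, hH.sodeF_Gam_g01 hq] at h
  simp only [Matrix.cons_val_zero, Matrix.cons_val_one] at h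
  linear_combination h

lemma sodeF_two_x_v_g01_sub_u_g11 (hH : Helmholtz sodeF W g) (hW : IsOpen W)
    (hg : ∀ a b, DifferentiableOn ℝ (g a b) W) (hq : q ∈ W) :
    2 * q.2.1 0 * q.2.2 1 * g 0 1 q - q.2.2 0 * g 1 1 q = 0 := by
  have hd : ∀ a b, DifferentiableAt ℝ (g a b) q := fun a b =>
    (hg a b).differentiableAt (hW.mem_nhds hq)
  have h := Gam_eq_zero_of_eqOn_zero sodeF hW hq
    (f := fun r => r.2.2 0 * g 0 1 r - r.2.2 1 * g 1 1 r)
    fun r hr => hH.sodeF_u_g01_sub_v_g11 hW hg hr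
  rw [Gam_sub _ (by fun_prop) (by fun_prop), Gam_mul _ (by fun_prop) (by fun_prop),
    Gam_mul _ (by fun_prop) (by fun_prop), Gam_velocity, Gam_velocity,
    hH.sodeF_Gam_g01 hq, hH.sodeF_Gam_g11 hq] at h
  simp only [Matrix.cons_val_zero, Matrix.cons_val_one] at h
  linear_combination (2 / 3) * h + (q.2.1 0 / 3) * hH.sodeF_u_g00_add_two_v_g01 hq

lemma sodeF_g01_mul_eq_zero (hH : Helmholtz sodeF W g) (hW : IsOpen W)
    (hg : ∀ a b, DifferentiableOn ℝ (g a b) W) (hq : q ∈ W) :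
    g 0 1 q * (q.2.2 0 ^ 2 - 2 * q.2.1 0 * q.2.2 1 ^ 2) = 0 := by
  linear_combination q.2.2 0 * hH.sodeF_u_g01_sub_v_g11 hW hg hq -
    q.2.2 1 * hH.sodeF_two_x_v_g01_sub_u_g11 hW hg hq

lemma sodeF_g01_ne_zero (hH : Helmholtz sodeF W g) (hq : q ∈ W) (hu : q.2.2 0 ≠ 0)
    (hvx : 4 * q.2.2 1 + q.2.1 0 ≠ 0) (hdet : (Matrix.of fun a b => g a b q).det ≠ 0) :
    g 0 1 q ≠ 0 := by
  intro h01
  have h00 : g 0 0 q = 0 := by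
    simpa [h01, hu] using hH.sodeF_u_g00_add_two_v_g01 hq
  refine hdet (Matrix.det_eq_zero_of_row_eq_zero 0 fun j => ?_)
  fin_cases j
  · exact h00
  · exact h01
  · exact (hH.1 q hq 0 2).trans (hH.sodeF_g20_eq_zero hq hvx)

end Helmholtz

theorem stmt17_general (W : Set (E 3)) (hWo : IsOpen W)
    (hWsub : W ⊆ {p : E 3 | 0 < p.2.2 1 ∧ p.2.2 0 ≠ 0 ∧ p.2.1 0 ≠ 0 ∧
      4 * p.2.2 1 + p.2.1 0 ≠ 0}) :
    ¬ ∃ g : Fin 3 → Fin 3 → E 3 → ℝ,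
        (∀ a b, ContDiffOn ℝ (⊤ : ℕ∞) (g a b) W) ∧
        Helmholtz (![fun p => p.2.1 0 * p.2.2 1, fun p => p.2.2 0, fun _ => 0]) W g ∧
        ∃ p ∈ W, (Matrix.of fun a b => g a b p).det ≠ 0 := by
  rintro ⟨g, hg, hH, p, hp, hdet⟩
  obtain ⟨-, hu, -, hvx⟩ := hWsub hp
  have hgd : ∀ a b, DifferentiableOn ℝ (g a b) W := fun a b => (hg a b).differentiableOn (by simp)
  have hg01 : g 0 1 p ≠ 0 := hH.sodeF_g01_ne_zero hp hu hvx hdet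
  have hcurve : ∀ᶠ q in 𝓝 p, q.2.2 0 ^ 2 - 2 * q.2.1 0 * q.2.2 1 ^ 2 = 0 := by
    filter_upwards [hWo.mem_nhds hp,
      ((hg 0 1).continuousOn.continuousAt (hWo.mem_nhds hp)).eventually_ne hg01] with q hq hq01
    exact (mul_eq_zero.mp (hH.sodeF_g01_mul_eq_zero hWo hgd hq)).resolve_left hq01
  exact hu (velocity_eq_zero_of_eventually_eq hcurve)

/-- the SODE ẍ = xẏ, ÿ = ẋ, z̈ = 0 admits no regular Lagrangian
multiplier on any nonempty open subset of {v > 0, u ≠ 0, x ≠ 0, 4v + x ≠ 0}. -/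
theorem stmt17 (W : Set (E 3)) (hWne : W.Nonempty) (hWo : IsOpen W)
    (hWsub : W ⊆ {p : E 3 | 0 < p.2.2 1 ∧ p.2.2 0 ≠ 0 ∧ p.2.1 0 ≠ 0 ∧
      4 * p.2.2 1 + p.2.1 0 ≠ 0}) :
    ¬ ∃ g : Fin 3 → Fin 3 → E 3 → ℝ,
        (∀ a b, ContDiffOn ℝ (⊤ : ℕ∞) (g a b) W) ∧
        Helmholtz (![fun p => p.2.1 0 * p.2.2 1, fun p => p.2.2 0, fun _ => 0]) W g ∧
        ∃ p ∈ W, (Matrix.of fun a b => g a b p).det ≠ 0 :=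
  stmt17_general W hWo hWsub

end IP
end
end

section
/- Consider the SODE in dimension n = 3 given by ẍ = zt, ÿ = 0, z̈ = x, i.e. F¹ = zt, F² = 0, F³ = x in coordinates (t, x, y, z, u, v, w). The smooth function L := uw + v²/2 + x²/2 + t z²/2 on ℝ⁷ satisfies Γ(∂L/∂u^a) = ∂L/∂x^a for a = 1, 2, 3, and its velocity Hessian (∂²L/∂u^a∂u^b) is the constant symmetric matrix with rows (0,0,1), (0,1,0), (1,0,0), which has determinant −1 ≠ 0. Hence this system is variational: L is a regular Lagrangian whose Euler–Lagrange equations are equivalent to the system. -/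
/- Setting: the evolution space E = ℝ × ℝ^n × ℝ^n with coordinates (t, x^a, u^a),
   a SODE ẍ^a = F^a(t,x,ẋ), and all the associated geometric objects. -/

noncomputable section

/- L = ½ uᵀJu + x²/2 + tz²/2 with J the constant matrix below, so ∂L/∂u^a = (Ju)_a is
linear in the velocities. Its u-derivative is therefore J itself, and Γ acts on it by replacing u
with F, so the Euler–Lagrange equations reduce to the algebraic identity JF = ∂L/∂x, which reads
(x, 0, zt) = (x, 0, tz). -/

namespace IP

open Matrix

section VelocityLinear

variable {n : ℕ}

theorem fderiv_mulVec_velocity (J : Matrix (Fin n) (Fin n) ℝ) (a : Fin n) (p v : E n) :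
    fderiv ℝ (fun q : E n => (J *ᵥ q.2.2) a) p v = (J *ᵥ v.2.2) a := by
  let D : E n →L[ℝ] ℝ := (ContinuousLinearMap.proj a).comp
    ((LinearMap.toContinuousLinearMap (toLin' J)).comp
      ((ContinuousLinearMap.snd ℝ _ _).comp (ContinuousLinearMap.snd ℝ ℝ _)))
  have hD : (fun q : E n => (J *ᵥ q.2.2) a) = D := by
    ext q
    simp [D]
  rw [hD, ContinuousLinearMap.fderiv]
  simp [D]

variable {L : E n → ℝ} {J : Matrix (Fin n) (Fin n) ℝ}

theorem velocity_hessian_eq_of_fderiv_eu_eq_mulVec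
    (hL : ∀ q a, fderiv ℝ L q (eu a) = (J *ᵥ q.2.2) a)
    (a b : Fin n) (p : E n) :
    fderiv ℝ (fun q => fderiv ℝ L q (eu a)) p (eu b) = J a b := by
  simp only [hL, fderiv_mulVec_velocity]
  simp [eu]

theorem gam_fderiv_eu_of_fderiv_eu_eq_mulVec
    (hL : ∀ q a, fderiv ℝ L q (eu a) = (J *ᵥ q.2.2) a)
    (F : Fin n → E n → ℝ) (a : Fin n) (p : E n) :
    Gam F (fun q => fderiv ℝ L q (eu a)) p = (J *ᵥ fun b => F b p) a := by
  simp only [Gam, hL, fderiv_mulVec_velocity, GamV]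

end VelocityLinear

def lagrangian : E 3 → ℝ := fun s : E 3 =>
  s.2.2 0 * s.2.2 2 + (s.2.2 1) ^ 2 / 2 + (s.2.1 0) ^ 2 / 2 + s.1 * (s.2.1 2) ^ 2 / 2

theorem fderiv_lagrangian_apply (p v : E 3) :
    fderiv ℝ lagrangian p v =
      p.2.2 0 * v.2.2 2 + p.2.2 2 * v.2.2 0 + p.2.2 1 * v.2.2 1 + p.2.1 0 * v.2.1 0 +
        v.1 * p.2.1 2 ^ 2 / 2 + p.1 * p.2.1 2 * v.2.1 2 := by
  have hu (a : Fin 3) := ((ContinuousLinearMap.proj a).comp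
    ((ContinuousLinearMap.snd ℝ (Fin 3 → ℝ) (Fin 3 → ℝ)).comp
      (ContinuousLinearMap.snd ℝ ℝ _))).hasFDerivAt (x := p)
  have hx (a : Fin 3) := ((ContinuousLinearMap.proj a).comp
    ((ContinuousLinearMap.fst ℝ (Fin 3 → ℝ) (Fin 3 → ℝ)).comp
      (ContinuousLinearMap.snd ℝ ℝ _))).hasFDerivAt (x := p)
  have ht := (ContinuousLinearMap.fst ℝ ℝ ((Fin 3 → ℝ) × (Fin 3 → ℝ))).hasFDerivAt (x := p)
  have hL := (((((hu 0).mul (hu 2)).add (((hu 1).pow 2).mul_const 2⁻¹)).add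
    (((hx 0).pow 2).mul_const 2⁻¹)).add ((ht.mul ((hx 2).pow 2)).mul_const 2⁻¹))
    |>.congr_of_eventuallyEq (f₁ := lagrangian) (.of_forall fun s => by simp [lagrangian]; ring)
  rw [hL.fderiv]
  simp only [ContinuousLinearMap.comp_apply, ContinuousLinearMap.coe_snd',
    ContinuousLinearMap.proj_apply, Nat.add_one_sub_one, pow_one, nsmul_eq_mul, Nat.cast_ofNat,
    ContinuousLinearMap.coe_fst', smul_add, _root_.add_apply, _root_.smul_apply, smul_eq_mul]
  ring

theorem fderiv_lagrangian_eu (q : E 3) (a : Fin 3) :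
    fderiv ℝ lagrangian q (eu a) = (!![(0:ℝ), 0, 1; 0, 1, 0; 1, 0, 0] *ᵥ q.2.2) a := by
  rw [fderiv_lagrangian_apply]
  fin_cases a <;> simp [eu, mulVec, dotProduct, Fin.sum_univ_three]

theorem fderiv_lagrangian_ex (p : E 3) (a : Fin 3) :
    fderiv ℝ lagrangian p (ex a) = ![p.2.1 0, 0, p.1 * p.2.1 2] a := by
  rw [fderiv_lagrangian_apply]
  fin_cases a <;> simp [ex]

/-- for the SODE ẍ = zt, ÿ = 0, z̈ = x, the function
L = uw + v²/2 + x²/2 + tz²/2 satisfies the Euler–Lagrange equations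
Γ(∂L/∂u^a) = ∂L/∂x^a, its velocity Hessian is the constant matrix
!![0,0,1; 0,1,0; 1,0,0], and that matrix has determinant -1 ≠ 0; hence L is a
regular Lagrangian for this system. -/
theorem stmt18 :
    (∀ p : E 3, ∀ a : Fin 3,
      Gam (![fun p => p.2.1 2 * p.1, fun _ => 0, fun p => p.2.1 0])
        (fun q => fderiv ℝ
          (fun s : E 3 => s.2.2 0 * s.2.2 2 + (s.2.2 1) ^ 2 / 2 + (s.2.1 0) ^ 2 / 2 +
            s.1 * (s.2.1 2) ^ 2 / 2) q (eu a)) p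
      = fderiv ℝ
          (fun s : E 3 => s.2.2 0 * s.2.2 2 + (s.2.2 1) ^ 2 / 2 + (s.2.1 0) ^ 2 / 2 +
            s.1 * (s.2.1 2) ^ 2 / 2) p (ex a)) ∧
    (∀ p : E 3, ∀ a b : Fin 3,
      fderiv ℝ (fun q => fderiv ℝ
          (fun s : E 3 => s.2.2 0 * s.2.2 2 + (s.2.2 1) ^ 2 / 2 + (s.2.1 0) ^ 2 / 2 +
            s.1 * (s.2.1 2) ^ 2 / 2) q (eu a)) p (eu b)
        = !![(0:ℝ), 0, 1; 0, 1, 0; 1, 0, 0] a b) ∧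
    (!![(0:ℝ), 0, 1; 0, 1, 0; 1, 0, 0].det = -1 ∧ (-1 : ℝ) ≠ 0) := by
  refine ⟨fun p a => ?_,
    fun p a b => velocity_hessian_eq_of_fderiv_eu_eq_mulVec fderiv_lagrangian_eu a b p,
    by simp [det_fin_three], by norm_num⟩
  show Gam _ (fun q => fderiv ℝ lagrangian q (eu a)) p = fderiv ℝ lagrangian p (ex a)
  rw [gam_fderiv_eu_of_fderiv_eu_eq_mulVec fderiv_lagrangian_eu, fderiv_lagrangian_ex]
  fin_cases a <;> simp [mulVec, dotProduct, Fin.sum_univ_three, mul_comm]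

end IP
end
end

section
/- Consider the SODE in dimension n = 3 given by ẍ = xż, ÿ = x, z̈ = x, i.e. F¹ = xw, F² = x, F³ = x in coordinates (t, x, y, z, u, v, w). Then every point of the domain D := {(t,x,y,z,u,v,w) ∈ ℝ⁷ : w² − 2u > 0, u ≠ 0} has an open neighborhood W ⊆ D on which there exists a smooth symmetric matrix-valued function g = (g_{ab}) with det g nowhere zero satisfying the four Helmholtz conditions; that is, this system is locally variational on D. -/
/- Setting: the evolution space E = ℝ × ℝ^n × ℝ^n with coordinates (t, x^a, u^a),
   a SODE ẍ^a = F^a(t,x,ẋ), and all the associated geometric objects. -/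

noncomputable section

namespace IP

/-!
A single multiplier, polynomial in the velocities, works on all of D, so one can take W = D:
g = [[1, 0, -w/2], [0, -1, 1], [-w/2, 1, (w² - u)/2 - 1]], with det g = -(w² - 2u)/4.
The only nonzero connection coefficient is Γ¹₃ = -x/2, and Φ has first column (-w, -1, -1),
Φ¹₃ = u/2 and zeros elsewhere; with these the Helmholtz conditions are polynomial identities.
(Indices here run from 1; in the code they run over `Fin 3`, from 0.)
-/

section Coordinates

variable {n : ℕ}

def xCoord (i : Fin n) : E n →L[ℝ] ℝ :=
  (ContinuousLinearMap.proj i).comp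
    ((ContinuousLinearMap.fst ℝ (Fin n → ℝ) (Fin n → ℝ)).comp
      (ContinuousLinearMap.snd ℝ ℝ ((Fin n → ℝ) × (Fin n → ℝ))))

def uCoord (i : Fin n) : E n →L[ℝ] ℝ :=
  (ContinuousLinearMap.proj i).comp
    ((ContinuousLinearMap.snd ℝ (Fin n → ℝ) (Fin n → ℝ)).comp
      (ContinuousLinearMap.snd ℝ ℝ ((Fin n → ℝ) × (Fin n → ℝ))))

@[simp] lemma xCoord_apply (i : Fin n) (v : E n) : xCoord i v = v.2.1 i := rfl

@[simp] lemma uCoord_apply (i : Fin n) (v : E n) : uCoord i v = v.2.2 i := rfl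

lemma hasFDerivAt_xCoord (i : Fin n) (p : E n) :
    HasFDerivAt (fun q : E n => q.2.1 i) (xCoord i) p :=
  (xCoord i).hasFDerivAt

lemma hasFDerivAt_uCoord (i : Fin n) (p : E n) :
    HasFDerivAt (fun q : E n => q.2.2 i) (uCoord i) p :=
  (uCoord i).hasFDerivAt

end Coordinates

def exampleSODE : Fin 3 → E 3 → ℝ :=
  ![fun p => p.2.1 0 * p.2.2 2, fun p => p.2.1 0, fun p => p.2.1 0]

def exampleMultiplier : Fin 3 → Fin 3 → E 3 → ℝ :=
  ![![fun _ => 1, fun _ => 0, fun p => -(1 / 2) * p.2.2 2],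
    ![fun _ => 0, fun _ => -1, fun _ => 1],
    ![fun p => -(1 / 2) * p.2.2 2, fun _ => 1,
      fun p => (1 / 2) * (p.2.2 2 * p.2.2 2 - p.2.2 0) - 1]]

def exampleDomain : Set (E 3) := {p | 0 < (p.2.2 2) ^ 2 - 2 * p.2.2 0 ∧ p.2.2 0 ≠ 0}

lemma isOpen_exampleDomain : IsOpen exampleDomain := by
  have hdisc : Continuous fun p : E 3 => (p.2.2 2) ^ 2 - 2 * p.2.2 0 := by fun_prop
  have hu : Continuous fun p : E 3 => p.2.2 0 := by fun_prop
  exact (isOpen_lt continuous_const hdisc).inter (isOpen_ne_fun hu continuous_const)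

lemma fderiv_exampleSODE (a : Fin 3) (p v : E 3) :
    fderiv ℝ (exampleSODE a) p v =
      if a = 0 then p.2.1 0 * v.2.2 2 + p.2.2 2 * v.2.1 0 else v.2.1 0 := by
  fin_cases a
  · have hF : HasFDerivAt (fun q : E 3 => q.2.1 0 * q.2.2 2) _ p :=
      (hasFDerivAt_xCoord 0 p).mul (hasFDerivAt_uCoord 2 p)
    simp [exampleSODE, hF.fderiv]
  all_goals simp [exampleSODE, (hasFDerivAt_xCoord 0 p).fderiv]

lemma Gc_exampleSODE (a b : Fin 3) (p : E 3) :
    Gc exampleSODE a b p = if a = 0 ∧ b = 2 then -(1 / 2) * p.2.1 0 else 0 := by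
  fin_cases a <;> fin_cases b <;> simp [Gc, fderiv_exampleSODE, eu]

lemma Gam_Gc_exampleSODE (a b : Fin 3) (p : E 3) :
    Gam exampleSODE (Gc exampleSODE a b) p =
      if a = 0 ∧ b = 2 then -(1 / 2) * p.2.2 0 else 0 := by
  by_cases hab : a = 0 ∧ b = 2
  · have hGc : Gc exampleSODE a b = fun q => -(1 / 2) * q.2.1 0 :=
      funext fun q => by simp [Gc_exampleSODE, hab]
    rw [Gam, hGc, ((hasFDerivAt_xCoord 0 p).const_mul _).fderiv]
    simp [GamV, hab]
  · have hGc : Gc exampleSODE a b = fun _ => 0 := funext fun _ => by simp [Gc_exampleSODE, hab]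
    simp [Gam, hGc, hab]

lemma Phi_exampleSODE (a b : Fin 3) (p : E 3) :
    Phi exampleSODE a b p =
      if b = 0 then (if a = 0 then -p.2.2 2 else -1)
      else if a = 0 ∧ b = 2 then (1 / 2) * p.2.2 0 else 0 := by
  fin_cases a <;> fin_cases b <;>
    simp [Phi, Gam_Gc_exampleSODE, Gc_exampleSODE, fderiv_exampleSODE, ex]

lemma contDiff_exampleMultiplier (a b : Fin 3) :
    ContDiff ℝ (⊤ : ℕ∞) (exampleMultiplier a b) := by
  fin_cases a <;> fin_cases b <;> simp [exampleMultiplier] <;> fun_prop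

lemma fderiv_exampleMultiplier (a b : Fin 3) (p v : E 3) :
    fderiv ℝ (exampleMultiplier a b) p v =
      if a = 2 ∧ b = 2 then p.2.2 2 * v.2.2 2 - (1 / 2) * v.2.2 0
      else if (a = 0 ∧ b = 2) ∨ (a = 2 ∧ b = 0) then -(1 / 2) * v.2.2 2 else 0 := by
  have hw : HasFDerivAt (fun q : E 3 => -(1 / 2) * q.2.2 2) _ p :=
    (hasFDerivAt_uCoord 2 p).const_mul _
  have hg : HasFDerivAt (fun q : E 3 => (1 / 2) * (q.2.2 2 * q.2.2 2 - q.2.2 0) - 1) _ p :=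
    ((((hasFDerivAt_uCoord 2 p).mul (hasFDerivAt_uCoord 2 p)).sub
      (hasFDerivAt_uCoord 0 p)).const_mul _).sub_const _
  fin_cases a <;> fin_cases b <;>
    simp only [exampleMultiplier, Matrix.cons_val_zero, Matrix.cons_val_one, Matrix.cons_val_two,
      Matrix.head_cons, Matrix.tail_cons, Fin.zero_eta, Fin.mk_one, Fin.reduceFinMk, hw.fderiv,
      hg.fderiv] <;>
    simp
  ring

lemma exampleMultiplier_symm (a b : Fin 3) : exampleMultiplier a b = exampleMultiplier b a := by
  fin_cases a <;> fin_cases b <;> rfl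

lemma Gam_exampleMultiplier (a b : Fin 3) (q : E 3) :
    Gam exampleSODE (exampleMultiplier a b) q =
      (∑ c, exampleMultiplier a c q * Gc exampleSODE c b q) +
        ∑ c, exampleMultiplier b c q * Gc exampleSODE c a q := by
  simp only [Gam, fderiv_exampleMultiplier, GamV, Fin.sum_univ_three, Gc_exampleSODE]
  fin_cases a <;> fin_cases b <;> simp [exampleSODE, exampleMultiplier]
  ring

lemma exampleMultiplier_mul_Phi_symm (a b : Fin 3) (q : E 3) :
    ∑ c, exampleMultiplier a c q * Phi exampleSODE c b q =
      ∑ c, exampleMultiplier b c q * Phi exampleSODE c a q := by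
  fin_cases a <;> fin_cases b <;>
    simp [Fin.sum_univ_three, Phi_exampleSODE, exampleMultiplier] <;> ring

lemma fderiv_exampleMultiplier_eu_symm (a b c : Fin 3) (q : E 3) :
    fderiv ℝ (exampleMultiplier a b) q (eu c) = fderiv ℝ (exampleMultiplier a c) q (eu b) := by
  fin_cases a <;> fin_cases b <;> fin_cases c <;> simp [fderiv_exampleMultiplier, eu]

lemma helmholtz_exampleMultiplier (U : Set (E 3)) : Helmholtz exampleSODE U exampleMultiplier :=
  ⟨fun q _ a b => congrFun (exampleMultiplier_symm a b) q,
    fun q _ a b => Gam_exampleMultiplier a b q,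
    fun q _ a b => exampleMultiplier_mul_Phi_symm a b q,
    fun q _ a b c => fderiv_exampleMultiplier_eu_symm a b c q⟩

lemma det_exampleMultiplier (q : E 3) :
    (Matrix.of fun a b => exampleMultiplier a b q).det =
      -(1 / 4) * ((q.2.2 2) ^ 2 - 2 * q.2.2 0) := by
  simp [Matrix.det_fin_three, exampleMultiplier]
  ring

/-- the SODE ẍ = xż, ÿ = x, z̈ = x is locally variational on
D = {w² - 2u > 0, u ≠ 0}: every point of D has a neighborhood carrying a smooth
symmetric nondegenerate multiplier satisfying the four Helmholtz conditions. -/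
theorem stmt19 :
    ∀ p ∈ {p : E 3 | 0 < (p.2.2 2) ^ 2 - 2 * p.2.2 0 ∧ p.2.2 0 ≠ 0},
      ∃ W : Set (E 3), IsOpen W ∧ p ∈ W ∧
        W ⊆ {p : E 3 | 0 < (p.2.2 2) ^ 2 - 2 * p.2.2 0 ∧ p.2.2 0 ≠ 0} ∧
        ∃ g : Fin 3 → Fin 3 → E 3 → ℝ,
          (∀ a b, ContDiffOn ℝ (⊤ : ℕ∞) (g a b) W) ∧
          (∀ q ∈ W, (Matrix.of fun a b => g a b q).det ≠ 0) ∧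
          Helmholtz (![fun p => p.2.1 0 * p.2.2 2, fun p => p.2.1 0, fun p => p.2.1 0])
            W g := by
  intro p hp
  refine ⟨exampleDomain, isOpen_exampleDomain, hp, subset_rfl, exampleMultiplier,
    fun a b => (contDiff_exampleMultiplier a b).contDiffOn, fun q hq => ?_,
    helmholtz_exampleMultiplier _⟩
  rw [det_exampleMultiplier]
  exact mul_ne_zero (by norm_num) hq.1.ne'

end IP
end
end
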